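/- arXiv:1906.03558 — 6 statements merged into one kernel-verified Lean document; each statement's English description precedes it below -/
import Mathlib

section
/- Let α be a nonnegative random variable taking values in [0,H) (0 < H ≤ ∞) with absolutely continuous distribution function F, density f, survival function F̄ = 1 - F, and finite mean Eα > c ≥ 0. In the n-firm Cournot game with payoffs π_i(x_1,…,x_n) = x_i·(E[(α - Σ_j x_j)_+] - c), if (x*,…,x*) with x* > 0 is a pure Nash equilibrium, then x* satisfies the first-order condition ∫_{n x*}^{H} u f(u) du - c = (n+1) x* F̄(n x*). -/
open MeasureTheory Set Filter Function

noncomputable section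

/-- Expected payoff of firm `i` in the `n`-firm Cournot game with stochastic
demand intercept `α` and constant marginal cost `c`. -/
def payoff {Ω : Type*} [MeasurableSpace Ω] (μ : Measure Ω) (α : Ω → ℝ) (c : ℝ)
    {n : ℕ} (x : Fin n → ℝ) (i : Fin n) : ℝ :=
  x i * ((∫ ω, max (α ω - ∑ j, x j) 0 ∂μ) - c)

/-- Pure Nash equilibrium with nonnegative outputs. -/
def IsNash {Ω : Type*} [MeasurableSpace Ω] (μ : Measure Ω) (α : Ω → ℝ) (c : ℝ)
    {n : ℕ} (x : Fin n → ℝ) : Prop :=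
  (∀ i, 0 ≤ x i) ∧
    ∀ i : Fin n, ∀ y : ℝ, 0 ≤ y →
      payoff μ α c (Function.update x i y) i ≤ payoff μ α c x i

/-! The stop-loss transform `G s = E[(α - s)₊]` has derivative `-P(α > s)` wherever the tail
`s ↦ P(α > s)` is continuous, since the difference quotients of `G` are squeezed between tail
probabilities. In a symmetric equilibrium with `x* > 0`, firm `i`'s payoff
`y ↦ y (G (y + (n - 1) x*) - c)` has an interior maximum at `x*`, so
`G (n x*) - c - x* P(α > n x*) = 0`; expressing `G (n x*)` through the density,
`G t = ∫_{t}^∞ u f u du - t (1 - F t)`, turns this into the first-order condition. -/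

open Topology

lemma hasDerivAt_of_sub_mem_Icc {G g : ℝ → ℝ} {t : ℝ}
    (hG : ∀ a b, a ≤ b → G a - G b ∈ Icc ((b - a) * g b) ((b - a) * g a))
    (hg : ContinuousAt g t) : HasDerivAt G (-g t) t := by
  have hslope : ∀ s ≠ t, slope G t s ∈ uIcc (-g s) (-g t) := by
    intro s hs
    rw [slope_def_field]
    rcases hs.lt_or_gt with h | h
    · obtain ⟨h1, h2⟩ := hG s t h.le
      have hst : s - t < 0 := by linarith
      refine Icc_subset_uIcc ⟨?_, ?_⟩
      · exact (le_div_iff_of_neg hst).2 (by linarith)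
      · exact (div_le_iff_of_neg hst).2 (by linarith)
    · obtain ⟨h1, h2⟩ := hG t s h.le
      have hst : 0 < s - t := by linarith
      refine Icc_subset_uIcc' ⟨?_, ?_⟩
      · exact (le_div_iff₀ hst).2 (by linarith)
      · exact (div_le_iff₀ hst).2 (by linarith)
  have hlim : Tendsto (fun s => -g s) (𝓝[≠] t) (𝓝 (-g t)) :=
    hg.neg.tendsto.mono_left nhdsWithin_le_nhds
  rw [hasDerivAt_iff_tendsto_slope]
  refine tendsto_of_tendsto_of_tendsto_of_le_of_le'
    (by simpa using hlim.min (tendsto_const_nhds (x := -g t)))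
    (by simpa using hlim.max (tendsto_const_nhds (x := -g t))) ?_ ?_
  · filter_upwards [self_mem_nhdsWithin] with s hs using (hslope s hs).1
  · filter_upwards [self_mem_nhdsWithin] with s hs using (hslope s hs).2

lemma max_sub_sub_max_sub_mem_Icc_indicator {a b : ℝ} (hab : a ≤ b) (x : ℝ) :
    max (x - a) 0 - max (x - b) 0 ∈
      Icc ((Ioi b).indicator (fun _ => b - a) x) ((Ioi a).indicator (fun _ => b - a) x) := by
  simp only [Set.indicator, mem_Ioi, mem_Icc]
  constructor <;> split_ifs <;> grind

def stopLoss (ν : Measure ℝ) (s : ℝ) : ℝ := ∫ u, max (u - s) 0 ∂ν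

section StopLoss

variable {ν : Measure ℝ} [IsFiniteMeasure ν]

lemma integrable_posPart_sub (hν : Integrable id ν) (s : ℝ) :
    Integrable (fun u => max (u - s) 0) ν :=
  (hν.sub (integrable_const s)).pos_part

lemma stopLoss_sub_stopLoss_mem_Icc (hν : Integrable id ν) {a b : ℝ} (hab : a ≤ b) :
    stopLoss ν a - stopLoss ν b ∈ Icc ((b - a) * ν.real (Ioi b)) ((b - a) * ν.real (Ioi a)) := by
  have hint := (integrable_posPart_sub hν a).sub (integrable_posPart_sub hν b)
  have hind : ∀ c, ∫ u, (Ioi c).indicator (fun _ => b - a) u ∂ν = (b - a) * ν.real (Ioi c) :=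
    fun c => by rw [integral_indicator_const _ measurableSet_Ioi, smul_eq_mul, mul_comm]
  rw [stopLoss, stopLoss, ← integral_sub (integrable_posPart_sub hν a)
    (integrable_posPart_sub hν b), ← hind, ← hind]
  exact ⟨integral_mono ((integrable_const _).indicator measurableSet_Ioi) hint
      fun u => (max_sub_sub_max_sub_mem_Icc_indicator hab u).1,
    integral_mono hint ((integrable_const _).indicator measurableSet_Ioi)
      fun u => (max_sub_sub_max_sub_mem_Icc_indicator hab u).2⟩

lemma hasDerivAt_stopLoss (hν : Integrable id ν) {t : ℝ}
    (hcont : ContinuousAt (fun s => ν.real (Ioi s)) t) :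
    HasDerivAt (stopLoss ν) (-ν.real (Ioi t)) t :=
  hasDerivAt_of_sub_mem_Icc (fun _ _ hab => stopLoss_sub_stopLoss_mem_Icc hν hab) hcont

lemma stopLoss_eq_setIntegral_sub (hν : Integrable id ν) (t : ℝ) :
    stopLoss ν t = (∫ u in Ioi t, u ∂ν) - t * ν.real (Ioi t) := by
  have hIoi : ∀ u ∈ Ioi t, max (u - t) 0 = u - t :=
    fun u hu => max_eq_left (sub_nonneg.2 (le_of_lt hu))
  rw [stopLoss, ← setIntegral_eq_integral_of_forall_compl_eq_zero (s := Ioi t)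
      fun u hu => max_eq_right (sub_nonpos.2 (not_lt.1 hu)),
    setIntegral_congr_fun measurableSet_Ioi hIoi,
    integral_sub (f := fun u => u) hν.integrableOn (integrable_const t).integrableOn,
    setIntegral_const, smul_eq_mul, mul_comm]

end StopLoss

lemma sum_update_const {n : ℕ} (i : Fin n) (xs y : ℝ) :
    ∑ j, update (fun _ : Fin n => xs) i y j = y - xs + n * xs := by
  classical
  have h := Finset.sum_eq_add_sum_sdiff_singleton_of_mem (Finset.mem_univ i) (fun _ : Fin n => xs)
  have hsum : ∑ _j : Fin n, xs = n * xs := by simp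
  rw [Finset.sum_update_of_mem (Finset.mem_univ i)]
  linarith

lemma IsNash.integral_posPart_sub_add_mul_eq_zero {Ω : Type*} [MeasurableSpace Ω] {μ : Measure Ω}
    {α : Ω → ℝ} {c xs D : ℝ} {n : ℕ} (hNash : IsNash μ α c (fun _ : Fin n => xs)) (i : Fin n)
    (hxs : 0 < xs) (hD : HasDerivAt (fun s => ∫ ω, max (α ω - s) 0 ∂μ) D (n * xs)) :
    (∫ ω, max (α ω - n * xs) 0 ∂μ) - c + xs * D = 0 := by
  set G := fun s => ∫ ω, max (α ω - s) 0 ∂μ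
  set r := n * xs - xs
  have hxr : xs + r = n * xs := by ring
  have hpayoff : ∀ y, payoff μ α c (update (fun _ : Fin n => xs) i y) i = y * (G (y + r) - c) := by
    intro y
    rw [payoff, sum_update_const, update_self, show y - xs + n * xs = y + r by ring]
  have hmax : IsLocalMax (fun y => y * (G (y + r) - c)) xs := by
    filter_upwards [Ioi_mem_nhds hxs] with y hy
    rw [← hpayoff, ← hpayoff, update_eq_self i (fun _ : Fin n => xs)]
    exact hNash.2 i y (le_of_lt hy)
  have hDr : HasDerivAt (fun y => G (y + r)) D xs := HasDerivAt.comp_add_const xs r (hxr ▸ hD)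
  have := hmax.hasDerivAt_eq_zero ((hasDerivAt_id xs).mul (hDr.sub_const c))
  simpa [hxr] using this

section WithDensity

variable {X : Type*} [MeasurableSpace X] {μ : Measure X} {f : X → ℝ}

lemma measureReal_withDensity_ofReal (hf : Integrable f μ) (hf0 : 0 ≤ᵐ[μ] f) {s : Set X}
    (hs : MeasurableSet s) :
    (μ.withDensity fun x => ENNReal.ofReal (f x)).real s = ∫ x in s, f x ∂μ := by
  rw [measureReal_def, withDensity_apply _ hs,
    ← ofReal_integral_eq_lintegral_ofReal hf.integrableOn (ae_restrict_of_ae hf0),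
    ENNReal.toReal_ofReal (integral_nonneg_of_ae (ae_restrict_of_ae hf0))]

lemma setIntegral_withDensity_ofReal (hf : AEMeasurable f μ) (hf0 : 0 ≤ᵐ[μ] f) (g : X → ℝ)
    {s : Set X} (hs : MeasurableSet s) :
    ∫ x in s, g x ∂μ.withDensity (fun x => ENNReal.ofReal (f x)) = ∫ x in s, g x * f x ∂μ := by
  rw [setIntegral_withDensity_eq_setIntegral_toReal_smul₀ hf.ennreal_ofReal.restrict
    (ae_of_all _ fun _ => ENNReal.ofReal_lt_top) g hs]
  refine setIntegral_congr_ae hs ?_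
  filter_upwards [hf0] with x hx _
  rw [ENNReal.toReal_ofReal hx, smul_eq_mul, mul_comm]

end WithDensity

lemma map_eq_withDensity_of_cdf {Ω : Type*} [MeasurableSpace Ω] {μ : Measure Ω}
    [IsFiniteMeasure μ] {α : Ω → ℝ} (hα : Measurable α) {f : ℝ → ℝ} (hf : Integrable f)
    (hf0 : 0 ≤ᵐ[volume] f) (hcdf : ∀ x, μ.real {ω | α ω ≤ x} = ∫ u in Iic x, f u) :
    μ.map α = volume.withDensity fun u => ENNReal.ofReal (f u) := by
  have := isFiniteMeasure_withDensity_ofReal hf.hasFiniteIntegral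
  refine Measure.ext_of_Iic _ _ fun x => ?_
  rw [← ofReal_measureReal, ← ofReal_measureReal, measureReal_withDensity_ofReal hf hf0
    measurableSet_Iic, map_measureReal_apply hα measurableSet_Iic]
  exact congrArg ENNReal.ofReal (hcdf x)

lemma continuous_measureReal_Ioi_withDensity_ofReal {f : ℝ → ℝ} (hf : Integrable f)
    (hf0 : 0 ≤ᵐ[volume] f) :
    Continuous fun s => (volume.withDensity fun u => ENNReal.ofReal (f u)).real (Ioi s) := by
  simp_rw [measureReal_withDensity_ofReal hf hf0 measurableSet_Ioi]
  refine continuous_iff_continuousAt.2 fun t => ?_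
  exact (hf.integrableOn.continuousOn_Ici_primitive_Ioi (a₀ := t - 1)).continuousAt
    (Ici_mem_nhds (by linarith))

lemma stopLoss_map {Ω : Type*} [MeasurableSpace Ω] {μ : Measure Ω} {α : Ω → ℝ}
    (hα : AEMeasurable α μ) (s : ℝ) :
    stopLoss (μ.map α) s = ∫ ω, max (α ω - s) 0 ∂μ :=
  integral_map hα (by fun_prop)

theorem stmt0_general {Ω : Type*} [MeasurableSpace Ω] (μ : Measure Ω) [IsProbabilityMeasure μ]
    (α : Ω → ℝ) (hαmeas : Measurable α)
    (hαint : Integrable α μ)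
    (F f : ℝ → ℝ)
    (hF : ∀ x : ℝ, F x = (μ {ω | α ω ≤ x}).toReal)
    (hfnonneg : ∀ x, 0 ≤ f x) (hfint : Integrable f)
    (hdens : ∀ x : ℝ, F x = ∫ u in Iic x, f u)
    (c : ℝ)
    (n : ℕ) (hn : 1 ≤ n)
    (xs : ℝ) (hxs : 0 < xs)
    (hNash : IsNash μ α c (fun _ : Fin n => xs)) :
    (∫ u in Ioi ((n : ℝ) * xs), u * f u) - c
      = ((n : ℝ) + 1) * xs * (1 - F ((n : ℝ) * xs)) := by
  set ν := μ.map α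
  have hf0 : 0 ≤ᵐ[volume] f := ae_of_all _ hfnonneg
  have hν : Integrable id ν := (integrable_map_measure aestronglyMeasurable_id
    hαmeas.aemeasurable).2 hαint
  have hlaw : ν = volume.withDensity fun u => ENNReal.ofReal (f u) :=
    map_eq_withDensity_of_cdf hαmeas hfint hf0 fun x => by rw [measureReal_def, ← hF, hdens]
  have : IsProbabilityMeasure ν := Measure.isProbabilityMeasure_map hαmeas.aemeasurable
  have htail : ∀ s, ν.real (Ioi s) = 1 - F s := fun s => by
    rw [← compl_Iic, probReal_compl_eq_one_sub measurableSet_Iic,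
      map_measureReal_apply hαmeas measurableSet_Iic, hF, measureReal_def]
    rfl
  have hderiv := hasDerivAt_stopLoss hν (t := n * xs)
    (hlaw ▸ continuous_measureReal_Ioi_withDensity_ofReal hfint hf0).continuousAt
  rw [funext (stopLoss_map hαmeas.aemeasurable)] at hderiv
  have hfoc := hNash.integral_posPart_sub_add_mul_eq_zero ⟨0, hn⟩ hxs hderiv
  rw [← stopLoss_map hαmeas.aemeasurable, stopLoss_eq_setIntegral_sub hν, htail, hlaw,
    setIntegral_withDensity_ofReal hfint.aemeasurable hf0 _ measurableSet_Ioi] at hfoc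
  linear_combination hfoc

/-- If `(x*, …, x*)` with `x* > 0` is a pure Nash equilibrium, then `x*` satisfies
the first-order condition `∫_{n x*}^H u f(u) du - c = (n+1) x* F̄(n x*)`. -/
theorem stmt0 {Ω : Type*} [MeasurableSpace Ω] (μ : Measure Ω) [IsProbabilityMeasure μ]
    (α : Ω → ℝ) (hαmeas : Measurable α)
    (H : EReal) (hH : 0 < H)
    (hval : ∀ᵐ ω ∂μ, 0 ≤ α ω ∧ (α ω : EReal) < H)
    (hαint : Integrable α μ)
    (F f : ℝ → ℝ)
    (hF : ∀ x : ℝ, F x = (μ {ω | α ω ≤ x}).toReal)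
    (hfmeas : Measurable f) (hfnonneg : ∀ x, 0 ≤ f x) (hfint : Integrable f)
    (hdens : ∀ x : ℝ, F x = ∫ u in Iic x, f u)
    (c : ℝ) (hc : 0 ≤ c) (hcE : c < ∫ ω, α ω ∂μ)
    (n : ℕ) (hn : 1 ≤ n)
    (xs : ℝ) (hxs : 0 < xs)
    (hNash : IsNash μ α c (fun _ : Fin n => xs)) :
    (∫ u in Ioi ((n : ℝ) * xs), u * f u) - c
      = ((n : ℝ) + 1) * xs * (1 - F ((n : ℝ) * xs)) :=
  stmt0_general μ α hαmeas hαint F f hF hfnonneg hfint hdens c n hn xs hxs hNash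
end
end

section
/- Let α be a nonnegative random variable taking values in [0,H) (0 < H ≤ ∞) with continuous distribution function F, survival function F̄ = 1 - F, F̄(x) > 0 for x < H, and finite mean Eα > c > 0. Define L(x) := m(x) - c/F̄(x) - x/n, where m is the mean residual demand function and n ≥ 1. Then L(0) = Eα - c > 0 and lim_{x → H^-} L(x) = -∞, and consequently there exists x ∈ (0,H) with L(x) = 0; i.e., a symmetric pure Nash equilibrium exists. -/
open MeasureTheory Set Filter Function Topology

noncomputable section

/-- The mean residual demand (MRD) function `m(x) = (1/F̄(x)) ∫_x^H F̄(u) du`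
(the survival function vanishes beyond `H`, so the integral may be taken over `(x,∞)`). -/
def mrd (F : ℝ → ℝ) (x : ℝ) : ℝ :=
  (∫ u in Ioi x, (1 - F u)) / (1 - F x)

/-- The function `L(x) = m(x) - c/F̄(x) - x/n`. -/
def Lfun (F : ℝ → ℝ) (c : ℝ) (n : ℕ) (x : ℝ) : ℝ :=
  mrd F x - c / (1 - F x) - x / n

/-!
Write `F̄ = 1 - F` and `T(x) = ∫_{(x,∞)} F̄`, so that `L = (T - c) / F̄ - x / n`.
The layer-cake formula gives `T(0) = Eα`, and `F(0) = 0` because `F` is continuous and vanishes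
on `(-∞, 0)`; hence `L(0) = Eα - c > 0`. As `x → H⁻`, both `F̄(x) = P(α > x)` and `T(x)` tend
to `0` by dominated convergence, because `α < H` almost surely and `F̄` vanishes on `[H, ∞)`;
this treats `H < ∞` and `H = ∞` alike. So `(T - c) / F̄ → -∞`, and `-x / n ≤ 0` only helps.
Since `L` is continuous on `[0, H)`, the intermediate value theorem yields a zero in `(0, H)`.
-/

namespace EReal

variable {H : EReal}

lemma comap_coe_nhdsLT_neBot (hH : ⊥ < H) : (comap ((↑) : ℝ → EReal) (𝓝[<] H)).NeBot := by
  have : (𝓝[<] H).NeBot := nhdsLT_neBot_of_exists_lt ⟨⊥, hH⟩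
  refine this.comap_of_range_mem (mem_of_superset
    (inter_mem (mem_nhdsWithin_of_mem_nhds (Ioi_mem_nhds hH)) self_mem_nhdsWithin) ?_)
  rintro y ⟨hy_bot, hy_H⟩
  exact ⟨y.toReal, coe_toReal (hy_H.trans_le le_top).ne hy_bot.ne'⟩

lemma eventually_gt_comap_coe_nhdsLT {u : ℝ} (hu : (u : EReal) < H) :
    ∀ᶠ x : ℝ in comap (↑) (𝓝[<] H), u < x :=
  ((eventually_gt_nhds hu).filter_mono nhdsWithin_le_nhds).comap _ |>.mono
    fun _ hx => EReal.coe_lt_coe_iff.1 hx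

lemma eventually_coe_lt_comap_coe_nhdsLT : ∀ᶠ x : ℝ in comap (↑) (𝓝[<] H), (x : EReal) < H :=
  eventually_mem_nhdsWithin.comap _

end EReal

open EReal

lemma tendsto_integral_Ioi_comap_coe_nhdsLT {E : Type*} [NormedAddCommGroup E] [NormedSpace ℝ E]
    {g : ℝ → E} {a : ℝ} {H : EReal} (ha : (a : EReal) < H) (hg : IntegrableOn g (Ioi a))
    (hg_zero : ∀ u : ℝ, H ≤ u → g u = 0) :
    Tendsto (fun x => ∫ u in Ioi x, g u) (comap (↑) (𝓝[<] H)) (𝓝 0) := by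
  simp_rw [← integral_indicator measurableSet_Ioi]
  rw [← integral_zero ℝ E]
  refine tendsto_integral_filter_of_dominated_convergence ((Ioi a).indicator (norm ∘ g)) ?_ ?_
    (by simpa [integrable_indicator_iff measurableSet_Ioi] using! hg.norm) ?_
  · filter_upwards [eventually_gt_comap_coe_nhdsLT ha] with x hx
    rw [aestronglyMeasurable_indicator_iff measurableSet_Ioi]
    exact (hg.mono_set (Ioi_subset_Ioi hx.le)).aestronglyMeasurable
  · filter_upwards [eventually_gt_comap_coe_nhdsLT ha] with x hx
    refine ae_of_all _ fun u => ?_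
    rw [norm_indicator_eq_indicator_norm]
    exact indicator_le_indicator_of_subset (Ioi_subset_Ioi hx.le) (fun _ => norm_nonneg _) u
  · refine ae_of_all _ fun u => tendsto_const_nhds.congr' ?_
    rcases lt_or_ge (u : EReal) H with hu | hu
    · filter_upwards [eventually_gt_comap_coe_nhdsLT hu] with x hx
      exact (indicator_of_notMem (not_lt.2 hx.le) g).symm
    · exact Eventually.of_forall fun x => by simp [indicator_apply, hg_zero u hu]

lemma Filter.Tendsto.div_nhdsGT_zero_of_neg {ι : Type*} {l : Filter ι} {f g : ι → ℝ} {C : ℝ}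
    (hC : C < 0) (hf : Tendsto f l (𝓝 C)) (hg : Tendsto g l (𝓝[>] 0)) :
    Tendsto (fun i => f i / g i) l atBot := by
  simpa only [div_eq_mul_inv, comp_def] using hf.neg_mul_atTop hC (tendsto_inv_nhdsGT_zero.comp hg)

section RandomVariable

variable {Ω : Type*} [MeasurableSpace Ω] {μ : Measure Ω} {f : Ω → ℝ}

lemma tendsto_measureReal_lt_comap_coe_nhdsLT [IsFiniteMeasure μ] (hf : Measurable f) {H : EReal}
    (hfH : ∀ᵐ ω ∂μ, (f ω : EReal) < H) :
    Tendsto (fun x : ℝ => μ.real {ω | x < f ω}) (comap (↑) (𝓝[<] H)) (𝓝 0) := by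
  have h := tendsto_measure_of_ae_tendsto_indicator_of_isFiniteMeasure
    (comap ((↑) : ℝ → EReal) (𝓝[<] H))
    (As := fun x : ℝ => {ω | x < f ω}) MeasurableSet.empty
    (fun _ => measurableSet_lt measurable_const hf) (hfH.mono fun ω hω =>
      (eventually_gt_comap_coe_nhdsLT hω).mono fun x hx => by simp [hx.le.not_gt])
  rw [measure_empty] at h
  simpa only [measureReal_def, comp_def, ENNReal.toReal_zero] using
    (ENNReal.tendsto_toReal ENNReal.zero_ne_top).comp h

lemma MeasureTheory.Integrable.integrableOn_measureReal_lt (hf : Integrable f μ)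
    (hf0 : 0 ≤ᵐ[μ] f) : IntegrableOn (fun t => μ.real {ω | t < f ω}) (Ioi 0) := by
  have hmeas : Measurable fun t => μ {ω | t < f ω} :=
    Antitone.measurable fun s t hst => measure_mono fun ω h => hst.trans_lt h
  refine ⟨hmeas.ennreal_toReal.aestronglyMeasurable, ?_⟩
  calc ∫⁻ t in Ioi 0, ‖μ.real {ω | t < f ω}‖ₑ
      ≤ ∫⁻ t in Ioi 0, μ {ω | t < f ω} := lintegral_mono fun t => by
        rw [Real.enorm_of_nonneg measureReal_nonneg]; exact ENNReal.ofReal_toReal_le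
    _ = ∫⁻ ω, ENNReal.ofReal (f ω) ∂μ := (lintegral_eq_lintegral_meas_lt μ hf0 hf.aemeasurable).symm
    _ < ⊤ := hf.lintegral_lt_top

lemma one_sub_cdf_eq_measureReal_lt [IsProbabilityMeasure μ] {F : ℝ → ℝ}
    (hF : ∀ x : ℝ, F x = (μ {ω | f ω ≤ x}).toReal) (hf : Measurable f) (x : ℝ) :
    1 - F x = μ.real {ω | x < f ω} := by
  rw [← probReal_univ (μ := μ), hF, ← measureReal_def,
    ← measureReal_compl (measurableSet_le hf measurable_const)]
  simp only [compl_ofPred, not_le]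

lemma cdf_zero_eq_zero_of_continuous {F : ℝ → ℝ} (hF : ∀ x : ℝ, F x = (μ {ω | f ω ≤ x}).toReal)
    (hFcont : Continuous F) (hf0 : 0 ≤ᵐ[μ] f) : F 0 = 0 := by
  have hneg : Iio 0 ⊆ {x | F x = 0} := fun x hx => by
    rw [mem_ofPred, hF, measure_eq_zero_iff_ae_notMem (s := {ω | f ω ≤ x}) |>.2
      (hf0.mono fun ω hω hωx => (hω.trans (show f ω ≤ x from hωx)).not_gt hx), ENNReal.toReal_zero]
  exact (isClosed_eq hFcont continuous_const).closure_subset_iff.2 hneg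
    (closure_Iio (0 : ℝ) ▸ self_mem_Iic)

lemma measureReal_lt_eq_zero_of_le {H : EReal} (hfH : ∀ᵐ ω ∂μ, (f ω : EReal) < H) {u : ℝ}
    (hu : H ≤ u) : μ.real {ω | u < f ω} = 0 := by
  rw [measureReal_def, measure_eq_zero_iff_ae_notMem (s := {ω | u < f ω}) |>.2
    (hfH.mono fun ω hω hωu => (hu.trans_lt (EReal.coe_lt_coe_iff.2 hωu)).not_gt hω),
    ENNReal.toReal_zero]

end RandomVariable

section MeanResidualDemand

variable {F : ℝ → ℝ} {c : ℝ} {n : ℕ}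

lemma Lfun_eq_tail_sub_div (x : ℝ) :
    Lfun F c n x = ((∫ u in Ioi x, (1 - F u)) - c) / (1 - F x) - x / n := by
  rw [Lfun, mrd, sub_div]

lemma continuousOn_Lfun {a : ℝ} {s : Set ℝ} (hFcont : Continuous F)
    (hint : IntegrableOn (fun u => 1 - F u) (Ioi a)) (hs : s ⊆ Ici a)
    (hpos : ∀ x ∈ s, 1 - F x ≠ 0) : ContinuousOn (Lfun F c n) s := by
  have htail := hint.continuousOn_Ici_primitive_Ioi.mono hs
  refine (((htail.sub continuousOn_const).div (continuous_const.sub hFcont).continuousOn hpos).sub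
    (continuous_id.div_const _).continuousOn).congr fun x _ => Lfun_eq_tail_sub_div x

lemma tendsto_Lfun_atBot {l : Filter ℝ} (hc : 0 < c)
    (htail : Tendsto (fun x => ∫ u in Ioi x, (1 - F u)) l (𝓝 0))
    (hsurv : Tendsto (fun x => 1 - F x) l (𝓝[>] 0)) (hl : ∀ᶠ x in l, 0 ≤ x) :
    Tendsto (Lfun F c n) l atBot := by
  refine tendsto_atBot_mono' l ?_
    ((htail.sub_const c).div_nhdsGT_zero_of_neg (by linarith) hsurv)
  filter_upwards [hl] with x hx
  rw [Lfun_eq_tail_sub_div]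
  exact sub_le_self _ (div_nonneg hx n.cast_nonneg)

end MeanResidualDemand

theorem stmt2_general {Ω : Type*} [MeasurableSpace Ω] (μ : Measure Ω) [IsProbabilityMeasure μ]
    (α : Ω → ℝ) (hαmeas : Measurable α)
    (H : EReal) (hH : 0 < H)
    (hval : ∀ᵐ ω ∂μ, 0 ≤ α ω ∧ (α ω : EReal) < H)
    (hαint : Integrable α μ)
    (F : ℝ → ℝ)
    (hF : ∀ x : ℝ, F x = (μ {ω | α ω ≤ x}).toReal)
    (hFcont : Continuous F)
    (hFbar : ∀ x : ℝ, 0 ≤ x → (x : EReal) < H → 0 < 1 - F x)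
    (c : ℝ) (hc : 0 < c) (hcE : c < ∫ ω, α ω ∂μ)
    (n : ℕ) :
    Lfun F c n 0 = (∫ ω, α ω ∂μ) - c ∧
      0 < Lfun F c n 0 ∧
      Tendsto (Lfun F c n) (Filter.comap (fun x : ℝ => (x : EReal)) (𝓝[<] H)) atBot ∧
      ∃ x : ℝ, 0 < x ∧ (x : EReal) < H ∧ Lfun F c n x = 0 := by
  obtain ⟨hα0, hαH⟩ : (∀ᵐ ω ∂μ, 0 ≤ α ω) ∧ ∀ᵐ ω ∂μ, (α ω : EReal) < H :=
    ⟨hval.mono fun _ h => h.1, hval.mono fun _ h => h.2⟩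
  have hsurv := one_sub_cdf_eq_measureReal_lt hF hαmeas
  have hint : IntegrableOn (fun u => 1 - F u) (Ioi 0) := by
    simpa only [hsurv] using hαint.integrableOn_measureReal_lt hα0
  have hL0 : Lfun F c n 0 = (∫ ω, α ω ∂μ) - c := by
    simp [Lfun_eq_tail_sub_div, cdf_zero_eq_zero_of_continuous hF hFcont hα0,
      hαint.integral_eq_integral_meas_lt hα0, hsurv]
  have hL0pos : 0 < Lfun F c n 0 := hL0 ▸ sub_pos.2 hcE
  have hH0 : ((0 : ℝ) : EReal) < H := hH
  have hnear : ∀ᶠ x : ℝ in comap (↑) (𝓝[<] H), 0 < x ∧ (x : EReal) < H :=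
    (eventually_gt_comap_coe_nhdsLT hH0).and eventually_coe_lt_comap_coe_nhdsLT
  have htail_lim := tendsto_integral_Ioi_comap_coe_nhdsLT hH0 hint
    fun u hu => (hsurv u).trans (measureReal_lt_eq_zero_of_le hαH hu)
  have hsurv_lim : Tendsto (fun x => 1 - F x) (comap (↑) (𝓝[<] H)) (𝓝[>] 0) :=
    tendsto_nhdsWithin_iff.2 ⟨by simpa only [hsurv] using
      tendsto_measureReal_lt_comap_coe_nhdsLT hαmeas hαH,
      hnear.mono fun x hx => hFbar x hx.1.le hx.2⟩
  have htend : Tendsto (Lfun F c n) (comap (↑) (𝓝[<] H)) atBot :=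
    tendsto_Lfun_atBot hc htail_lim hsurv_lim (hnear.mono fun x hx => hx.1.le)
  have := comap_coe_nhdsLT_neBot (bot_le.trans_lt hH)
  obtain ⟨b, ⟨hb0, hbH⟩, hbneg⟩ := (hnear.and (htend.eventually_lt_atBot 0)).exists
  obtain ⟨x, ⟨hx0, hxb⟩, hx⟩ := intermediate_value_Ioo' hb0.le
    (continuousOn_Lfun hFcont hint Icc_subset_Ici_self fun x hx =>
      (hFbar x hx.1 ((EReal.coe_le_coe_iff.2 hx.2).trans_lt hbH)).ne') ⟨hbneg, hL0pos⟩
  exact ⟨hL0, hL0pos, htend, x, hx0, (EReal.coe_lt_coe_iff.2 hxb).trans hbH, hx⟩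

/-- `L(0) = Eα - c > 0`, `L(x) → -∞` as `x → H⁻`, and consequently `L` has a zero in
`(0,H)`, i.e., a symmetric pure Nash equilibrium exists. -/
theorem stmt2 {Ω : Type*} [MeasurableSpace Ω] (μ : Measure Ω) [IsProbabilityMeasure μ]
    (α : Ω → ℝ) (hαmeas : Measurable α)
    (H : EReal) (hH : 0 < H)
    (hval : ∀ᵐ ω ∂μ, 0 ≤ α ω ∧ (α ω : EReal) < H)
    (hαint : Integrable α μ)
    (F : ℝ → ℝ)
    (hF : ∀ x : ℝ, F x = (μ {ω | α ω ≤ x}).toReal)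
    (hFcont : Continuous F)
    (hFbar : ∀ x : ℝ, 0 ≤ x → (x : EReal) < H → 0 < 1 - F x)
    (c : ℝ) (hc : 0 < c) (hcE : c < ∫ ω, α ω ∂μ)
    (n : ℕ) (hn : 1 ≤ n) :
    Lfun F c n 0 = (∫ ω, α ω ∂μ) - c ∧
      0 < Lfun F c n 0 ∧
      Tendsto (Lfun F c n) (Filter.comap (fun x : ℝ => (x : EReal)) (𝓝[<] H)) atBot ∧
      ∃ x : ℝ, 0 < x ∧ (x : EReal) < H ∧ Lfun F c n x = 0 :=
  stmt2_general μ α hαmeas H hH hval hαint F hF hFcont hFbar c hc hcE n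
end
end

section
/- Let α be a nonnegative random variable with continuous distribution function F, values in [0,H) (0 < H ≤ ∞), survival function F̄ = 1 - F positive on [0,H), and finite mean Eα > c ≥ 0. If α is DMRD (its mean residual demand function m is nonincreasing on [0,H)), then the function x ↦ P(x) - c, where P(x) := E[(α - x)_+], is log-concave on the set {x ∈ [0,H) : P(x) > c}; equivalently, x ↦ log(P(x) - c) is concave there. -/
/-!
The layer-cake formula gives `P(x) = ∫_x^∞ F̄`, so `P' = -F̄` and the logarithmic derivative of
`P - c` is `-F̄ / (P - c)`. Log-concavity thus amounts to `F̄ / (P - c)` being nondecreasing: for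
`x ≤ y`, the inequality `F̄(x) (P(y) - c) ≤ F̄(y) (P(x) - c)` is the sum of
`F̄(x) P(y) ≤ F̄(y) P(x)`, which is DMRD because `m = P / F̄`, and `c F̄(y) ≤ c F̄(x)`.
-/

open MeasureTheory Set Filter Function

noncomputable section

/-- The expected price `P(x) = E[(α - x)₊]` at total output `x`. -/
def Pfun {Ω : Type*} [MeasurableSpace Ω] (μ : Measure Ω) (α : Ω → ℝ) (x : ℝ) : ℝ :=
  ∫ ω, max (α ω - x) 0 ∂μ

def survival {Ω : Type*} [MeasurableSpace Ω] (μ : Measure Ω) (α : Ω → ℝ) (u : ℝ) : ℝ :=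
  μ.real {ω | u < α ω}

theorem concaveOn_log_of_antitoneOn_logDeriv {S : Set ℝ} {f : ℝ → ℝ} (hS : Convex ℝ S)
    (hf : ∀ x ∈ S, DifferentiableAt ℝ f x) (hpos : ∀ x ∈ S, 0 < f x)
    (hanti : AntitoneOn (logDeriv f) S) : ConcaveOn ℝ S (fun x => Real.log (f x)) := by
  refine AntitoneOn.concaveOn_of_deriv hS
    (fun x hx => ((hf x hx).continuousAt.log (hpos x hx).ne').continuousWithinAt)
    (fun x hx => ((hf x (interior_subset hx)).log (hpos x (interior_subset hx)).ne')
      |>.differentiableWithinAt) ?_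
  refine (hanti.mono interior_subset).congr fun x hx => ?_
  rw [deriv.log (hf x (interior_subset hx)) (hpos x (interior_subset hx)).ne', logDeriv_apply]

theorem div_sub_le_div_sub_of_div_le_div {p q g h c : ℝ} (hc : 0 ≤ c) (hcp : c < p)
    (hcq : c < q) (hh : 0 < h) (hhg : h ≤ g) (hqp : q / h ≤ p / g) :
    g / (p - c) ≤ h / (q - c) := by
  have hg : 0 < g := hh.trans_le hhg
  rw [div_le_div_iff₀ hh hg] at hqp
  rw [div_le_div_iff₀ (sub_pos.2 hcp) (sub_pos.2 hcq)]
  nlinarith [mul_le_mul_of_nonneg_left hhg hc]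

theorem integrableOn_Ioi_measureReal_lt {Ω : Type*} [MeasurableSpace Ω] {μ : Measure Ω}
    {f : Ω → ℝ} (hf : Integrable f μ) (hf0 : 0 ≤ᵐ[μ] f) :
    IntegrableOn (fun t => μ.real {ω | t < f ω}) (Ioi 0) := by
  have hmeas : Measurable fun t => μ.real {ω | t < f ω} :=
    (Antitone.measurable fun s t hst =>
      measure_mono (μ := μ) fun ω (h : t < f ω) => hst.trans_lt h).ennreal_toReal
  refine ⟨hmeas.aestronglyMeasurable, (hasFiniteIntegral_iff_ofReal
    (Eventually.of_forall fun t => measureReal_nonneg)).2 ?_⟩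
  calc ∫⁻ t in Ioi 0, ENNReal.ofReal (μ.real {ω | t < f ω})
      ≤ ∫⁻ t in Ioi 0, μ {ω | t < f ω} := lintegral_mono fun t => ENNReal.ofReal_toReal_le
    _ = ∫⁻ ω, ENNReal.ofReal (f ω) ∂μ :=
      (lintegral_eq_lintegral_meas_lt μ hf0 hf.aemeasurable).symm
    _ < ⊤ := hf.lintegral_lt_top

theorem setIntegral_Ioi_comp_const_add (g : ℝ → ℝ) (x : ℝ) :
    ∫ t in Ioi 0, g (x + t) = ∫ u in Ioi x, g u := by
  simpa using ((measurePreserving_add_left volume x).setIntegral_image_emb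
    (measurableEmbedding_addLeft x) g (Ioi 0)).symm

theorem integrableOn_Ioi_comp_const_add {g : ℝ → ℝ} {x : ℝ} :
    IntegrableOn (fun t => g (x + t)) (Ioi 0) ↔ IntegrableOn g (Ioi x) := by
  simpa [comp_def] using ((measurePreserving_add_left volume x).integrableOn_image
    (measurableEmbedding_addLeft x) (f := g) (s := Ioi 0)).symm

section Survival

variable {Ω : Type*} [MeasurableSpace Ω] {μ : Measure Ω} {α : Ω → ℝ}

theorem survival_add {x t : ℝ} (ht : 0 < t) :
    survival μ α (x + t) = μ.real {ω | t < max (α ω - x) 0} := by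
  simp only [survival, lt_max_iff, not_lt_of_gt ht, or_false, lt_sub_iff_add_lt']

theorem integrable_max_sub [IsFiniteMeasure μ] (hα : Integrable α μ) (x : ℝ) :
    Integrable (fun ω => max (α ω - x) 0) μ :=
  (hα.sub (integrable_const x)).pos_part

theorem integrableOn_Ioi_survival [IsFiniteMeasure μ] (hα : Integrable α μ) (x : ℝ) :
    IntegrableOn (survival μ α) (Ioi x) := by
  have h := integrableOn_Ioi_measureReal_lt (integrable_max_sub hα x)
    (Eventually.of_forall fun ω => le_max_right (α ω - x) 0)
  rw [← integrableOn_Ioi_comp_const_add]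
  exact h.congr_fun (fun t (ht : 0 < t) => (survival_add ht).symm) measurableSet_Ioi

theorem Pfun_eq_setIntegral_survival [IsFiniteMeasure μ] (hα : Integrable α μ) (x : ℝ) :
    Pfun μ α x = ∫ u in Ioi x, survival μ α u := by
  rw [Pfun, (integrable_max_sub hα x).integral_eq_integral_meas_lt
      (Eventually.of_forall fun ω => le_max_right _ _),
    ← setIntegral_Ioi_comp_const_add (survival μ α) x]
  exact setIntegral_congr_fun measurableSet_Ioi fun t (ht : 0 < t) =>
    (survival_add (μ := μ) (α := α) ht).symm

theorem Pfun_sub_Pfun [IsFiniteMeasure μ] (hα : Integrable α μ) (x y : ℝ) :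
    Pfun μ α x - Pfun μ α y = ∫ u in x..y, survival μ α u := by
  rw [Pfun_eq_setIntegral_survival hα, Pfun_eq_setIntegral_survival hα]
  exact intervalIntegral.integral_Ioi_sub_Ioi' (integrableOn_Ioi_survival hα x)
    (integrableOn_Ioi_survival hα y)

theorem antitone_survival [IsFiniteMeasure μ] : Antitone (survival μ α) :=
  fun _ _ hst => measureReal_mono fun _ h => hst.trans_lt h

theorem hasDerivAt_Pfun [IsFiniteMeasure μ] (hα : Integrable α μ) {x : ℝ}
    (hcont : ContinuousAt (survival μ α) x) : HasDerivAt (Pfun μ α) (-survival μ α x) x := by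
  have hP : Pfun μ α = fun z => Pfun μ α 0 - ∫ u in (0 : ℝ)..z, survival μ α u := by
    ext z
    rw [← Pfun_sub_Pfun hα, sub_sub_cancel]
  rw [hP]
  exact (intervalIntegral.integral_hasDerivAt_right antitone_survival.intervalIntegrable
    antitone_survival.measurable.stronglyMeasurable.stronglyMeasurableAtFilter hcont).const_sub _

theorem antitone_Pfun [IsFiniteMeasure μ] (hα : Integrable α μ) : Antitone (Pfun μ α) :=
  fun x y hxy => integral_mono (integrable_max_sub hα y) (integrable_max_sub hα x)
    fun ω => max_le_max (by linarith) le_rfl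

theorem survival_eq_one_sub [IsProbabilityMeasure μ] (hα : AEMeasurable α μ) {F : ℝ → ℝ}
    (hF : ∀ x : ℝ, F x = (μ {ω | α ω ≤ x}).toReal) (u : ℝ) : survival μ α u = 1 - F u := by
  have hcompl : {ω | u < α ω} = {ω | α ω ≤ u}ᶜ := by ext ω; simp
  rw [survival, hcompl,
    measureReal_compl₀ (s := {ω | α ω ≤ u}) (hα.nullMeasurable measurableSet_Iic),
    probReal_univ, hF, measureReal_def]

theorem mrd_eq_Pfun_div_survival [IsProbabilityMeasure μ] (hα : Integrable α μ) {F : ℝ → ℝ}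
    (hF : ∀ x : ℝ, F x = (μ {ω | α ω ≤ x}).toReal) (x : ℝ) :
    mrd F x = Pfun μ α x / survival μ α x := by
  simp only [mrd, Pfun_eq_setIntegral_survival hα, survival_eq_one_sub hα.aemeasurable hF]

end Survival

theorem stmt7_general {Ω : Type*} [MeasurableSpace Ω] (μ : Measure Ω) [IsProbabilityMeasure μ]
    (α : Ω → ℝ)
    (H : EReal)
    (hαint : Integrable α μ)
    (F : ℝ → ℝ)
    (hF : ∀ x : ℝ, F x = (μ {ω | α ω ≤ x}).toReal)
    (hFcont : Continuous F)
    (hFbar : ∀ x : ℝ, 0 ≤ x → (x : EReal) < H → 0 < 1 - F x)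
    (c : ℝ) (hc : 0 ≤ c)
    (hDMRD : ∀ x y : ℝ, 0 ≤ x → x ≤ y → (y : EReal) < H → mrd F y ≤ mrd F x) :
    ConcaveOn ℝ {x : ℝ | 0 ≤ x ∧ (x : EReal) < H ∧ c < Pfun μ α x}
      (fun x => Real.log (Pfun μ α x - c)) := by
  have hG : survival μ α = fun u => 1 - F u := funext (survival_eq_one_sub hαint.aemeasurable hF)
  have hP' (x : ℝ) : HasDerivAt (fun z => Pfun μ α z - c) (-survival μ α x) x :=
    (hasDerivAt_Pfun hαint (by rw [hG]; fun_prop)).sub_const c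
  have hconvex : Convex ℝ {x : ℝ | 0 ≤ x ∧ (x : EReal) < H ∧ c < Pfun μ α x} :=
    OrdConnected.convex ⟨fun x hx z hz y hy => ⟨hx.1.trans hy.1,
      (EReal.coe_le_coe_iff.2 hy.2).trans_lt hz.2.1, hz.2.2.trans_le (antitone_Pfun hαint hy.2)⟩⟩
  refine concaveOn_log_of_antitoneOn_logDeriv hconvex (fun x _ => (hP' x).differentiableAt)
    (fun x hx => sub_pos.2 hx.2.2) fun a ha b hb hab => ?_
  simp only [logDeriv_apply, (hP' a).deriv, (hP' b).deriv, neg_div, neg_le_neg_iff]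
  refine div_sub_le_div_sub_of_div_le_div hc ha.2.2 hb.2.2 ?_ (antitone_survival hab) ?_
  · rw [hG]
    exact hFbar b (ha.1.trans hab) hb.2.1
  · rw [← mrd_eq_Pfun_div_survival hαint hF, ← mrd_eq_Pfun_div_survival hαint hF]
    exact hDMRD a b ha.1 hab hb.2.1

/-- If `α` is DMRD, then `x ↦ P(x) - c` is log-concave on `{x ∈ [0,H) : P(x) > c}`,
i.e., `x ↦ log (P(x) - c)` is concave there. -/
theorem stmt7 {Ω : Type*} [MeasurableSpace Ω] (μ : Measure Ω) [IsProbabilityMeasure μ]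
    (α : Ω → ℝ) (hαmeas : Measurable α)
    (H : EReal) (hH : 0 < H)
    (hval : ∀ᵐ ω ∂μ, 0 ≤ α ω ∧ (α ω : EReal) < H)
    (hαint : Integrable α μ)
    (F : ℝ → ℝ)
    (hF : ∀ x : ℝ, F x = (μ {ω | α ω ≤ x}).toReal)
    (hFcont : Continuous F)
    (hFbar : ∀ x : ℝ, 0 ≤ x → (x : EReal) < H → 0 < 1 - F x)
    (c : ℝ) (hc : 0 ≤ c) (hcE : c < ∫ ω, α ω ∂μ)
    (hDMRD : ∀ x y : ℝ, 0 ≤ x → x ≤ y → (y : EReal) < H → mrd F y ≤ mrd F x) :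
    ConcaveOn ℝ {x : ℝ | 0 ≤ x ∧ (x : EReal) < H ∧ c < Pfun μ α x}
      (fun x => Real.log (Pfun μ α x - c)) :=
  stmt7_general μ α H hαint F hF hFcont hFbar c hc hDMRD
end
end

section
/- Let α be a nonnegative random variable with distribution function F supported on [0,∞), survival function F̄ = 1 - F positive on [0,∞), and finite mean Eα. Suppose α is DGMRD (e(x) = m(x)/x is nonincreasing on (0,∞)) and let γ := lim_{x→∞} e(x) (which exists by monotonicity). Then for every constant β > 0: γ < 1/β if and only if E[α^{β+1}] < ∞. -/
open MeasureTheory Set Filter Function Topology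

noncomputable section

/-!
Write `G = 1 - F` and `L t = ∫_t^∞ G`, so that `e t = L t / (t G t)`. Since `L' = -G` from the
right, integration by parts gives, for `0 < a ≤ b`,
`∫_a^b t^β G + b^β L b = a^β L a + β ∫_a^b t^(β-1) L`.
If `γ < δ < 1/β`, then `L t ≤ δ t G t` for large `t`, so the last integral is at most
`δ ∫_a^b t^β G` and `(1 - βδ) ∫_a^b t^β G ≤ a^β L a` stays bounded.
If `γ ≥ 1/β`, then `e ≥ γ` everywhere by monotonicity, i.e. `t G t ≤ β L t`, and the identity makes
`t^β L t` nondecreasing; it is positive, yet `t^β L t ≤ ∫_t^∞ u^β G u → 0` once `t^β G` is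
integrable. Finally, by the layer-cake formula `E[α^(β+1)] < ∞` iff `∫_0^∞ t^β G t dt < ∞`.
-/

open ProbabilityTheory
open scoped Interval

section TailIntegral

variable {G : ℝ → ℝ} {a b β : ℝ}

theorem MeasureTheory.IntegrableOn.intervalIntegrable_of_Ioi {x y : ℝ}
    (hG : IntegrableOn G (Ioi a)) (hx : a ≤ x) (hy : a ≤ y) : IntervalIntegrable G volume x y :=
  ⟨hG.mono_set fun _ ht => hx.trans_lt ht.1, hG.mono_set fun _ ht => hy.trans_lt ht.1⟩

theorem intervalIntegrable_rpow_mul {f : ℝ → ℝ} (ha : 0 < a) (hab : a ≤ b)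
    (hf : IntervalIntegrable f volume a b) (γ : ℝ) :
    IntervalIntegrable (fun t => t ^ γ * f t) volume a b :=
  hf.continuousOn_mul <| continuousOn_id.rpow_const fun x hx =>
    Or.inl (ha.trans_le (by rw [uIcc_of_le hab] at hx; exact hx.1)).ne'

theorem intervalIntegrable_rpow_mul_integral_Ioi (ha : 0 < a) (hab : a ≤ b)
    (hG : IntegrableOn G (Ioi a)) (γ : ℝ) :
    IntervalIntegrable (fun t => t ^ γ * ∫ u in Ioi t, G u) volume a b :=
  intervalIntegrable_rpow_mul ha hab (hG.continuousOn_Ici_primitive_Ioi.mono fun x hx => by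
    rw [uIcc_of_le hab] at hx; exact hx.1).intervalIntegrable γ

theorem hasDerivWithinAt_integral_Ioi {x : ℝ} (hG : IntegrableOn G (Ioi a)) (hax : a < x)
    (hGx : ContinuousWithinAt G (Ici x) x) :
    HasDerivWithinAt (fun y => ∫ u in Ioi y, G u) (-G x) (Ici x) x := by
  have hmeas : StronglyMeasurableAtFilter G (𝓝[Ioi x] x) :=
    ⟨Ioi a, mem_nhdsWithin_of_mem_nhds (Ioi_mem_nhds hax), hG.aestronglyMeasurable⟩
  have hprim : HasDerivWithinAt (fun y => ∫ u in a..y, G u) (G x) (Ici x) x :=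
    intervalIntegral.integral_hasDerivWithinAt_right (hG.intervalIntegrable_of_Ioi le_rfl hax.le)
      hmeas (hGx.mono Ioi_subset_Ici_self)
  refine (hprim.const_sub (∫ u in Ioi a, G u)).congr (fun y hy => ?_) ?_ <;>
    rw [← intervalIntegral.integral_Ioi_sub_Ioi hG (by grind), sub_sub_cancel]

theorem intervalIntegral_rpow_mul_add_rpow_mul_integral_Ioi (ha : 0 < a) (hab : a ≤ b)
    (hG : IntegrableOn G (Ioi a)) (hGc : ∀ x, ContinuousWithinAt G (Ici x) x) (β : ℝ) :
    (∫ t in a..b, t ^ β * G t) + b ^ β * ∫ u in Ioi b, G u =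
      a ^ β * (∫ u in Ioi a, G u) + β * ∫ t in a..b, t ^ (β - 1) * ∫ u in Ioi t, G u := by
  have hIcc : [[a, b]] = Icc a b := uIcc_of_le hab
  have hIoo : Ioo (min a b) (max a b) = Ioo a b := by rw [min_eq_left hab, max_eq_right hab]
  have hpos : ∀ x ∈ [[a, b]], 0 < x := fun x hx => ha.trans_le (hIcc ▸ hx).1
  have hparts := intervalIntegral.integral_mul_deriv_eq_deriv_mul_of_hasDeriv_right
    (u := fun t => t ^ β) (v := fun t => ∫ u in Ioi t, G u) (u' := fun t => β * t ^ (β - 1))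
    (v' := fun t => -G t)
    (continuousOn_id.rpow_const fun x hx => Or.inl (hpos x hx).ne')
    (hG.continuousOn_Ici_primitive_Ioi.mono fun x hx => (hIcc ▸ hx : x ∈ Icc a b).1)
    (fun x hx => (Real.hasDerivAt_rpow_const
      (Or.inl (hpos x (hIcc ▸ Ioo_subset_Icc_self (hIoo ▸ hx))).ne')).hasDerivWithinAt)
    (fun x hx =>
      (hasDerivWithinAt_integral_Ioi hG (hIoo ▸ hx).1 (hGc x)).mono Ioi_subset_Ici_self)
    ((continuousOn_id.rpow_const fun x hx => Or.inl (hpos x hx).ne').intervalIntegrable.const_mul β)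
    (hG.intervalIntegrable_of_Ioi le_rfl hab).neg
  simp only [mul_neg, intervalIntegral.integral_neg, mul_assoc,
    intervalIntegral.integral_const_mul] at hparts
  linarith

theorem integrableOn_rpow_mul_of_integral_Ioi_le {δ : ℝ} (ha : 0 < a) (hβ : 0 ≤ β)
    (hβδ : β * δ < 1) (hG : IntegrableOn G (Ioi a)) (hG0 : 0 ≤ G)
    (hGc : ∀ x, ContinuousWithinAt G (Ici x) x)
    (hbound : ∀ t, a ≤ t → ∫ u in Ioi t, G u ≤ δ * t * G t) :
    IntegrableOn (fun t => t ^ β * G t) (Ioi a) := by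
  have hint (b : ℝ) (hab : a ≤ b) : IntervalIntegrable (fun t => t ^ β * G t) volume a b :=
    intervalIntegrable_rpow_mul ha hab (hG.intervalIntegrable_of_Ioi le_rfl hab) β
  refine integrableOn_Ioi_of_intervalIntegral_norm_bounded
    ((a ^ β * ∫ u in Ioi a, G u) / (1 - β * δ)) a (b := id) (fun b => ?_) tendsto_id ?_
  · rcases le_total a b with hab | hba
    · exact (intervalIntegrable_iff_integrableOn_Ioc_of_le hab).1 (hint b hab)
    · simp [Ioc_eq_empty_of_le hba]
  filter_upwards [eventually_ge_atTop a] with b hab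
  have hnorm : ∫ t in a..b, ‖t ^ β * G t‖ = ∫ t in a..b, t ^ β * G t :=
    intervalIntegral.integral_congr fun t ht => by
      rw [uIcc_of_le hab] at ht
      exact Real.norm_of_nonneg (mul_nonneg (Real.rpow_nonneg (ha.le.trans ht.1) β) (hG0 t))
  have hmono : ∫ t in a..b, t ^ (β - 1) * ∫ u in Ioi t, G u ≤
      δ * ∫ t in a..b, t ^ β * G t := by
    rw [← intervalIntegral.integral_const_mul]
    refine intervalIntegral.integral_mono_on hab
      (intervalIntegrable_rpow_mul_integral_Ioi ha hab hG _) ((hint b hab).const_mul δ)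
      fun t ht => ?_
    have ht0 : 0 < t := ha.trans_le ht.1
    calc t ^ (β - 1) * ∫ u in Ioi t, G u ≤ t ^ (β - 1) * (δ * t * G t) :=
          mul_le_mul_of_nonneg_left (hbound t ht.1) (Real.rpow_nonneg ht0.le _)
      _ = δ * (t ^ β * G t) := by rw [Real.rpow_sub_one ht0.ne']; field_simp
  have htail : 0 ≤ b ^ β * ∫ u in Ioi b, G u :=
    mul_nonneg (Real.rpow_nonneg (ha.le.trans hab) β)
      (setIntegral_nonneg measurableSet_Ioi fun u _ => hG0 u)
  have hparts := intervalIntegral_rpow_mul_add_rpow_mul_integral_Ioi ha hab hG hGc β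
  rw [id, hnorm, le_div_iff₀ (by linarith)]
  linarith [mul_le_mul_of_nonneg_left hmono hβ]

theorem monotoneOn_rpow_mul_integral_Ioi (ha : 0 < a) (hG : IntegrableOn G (Ioi a))
    (hGc : ∀ x, ContinuousWithinAt G (Ici x) x)
    (hbound : ∀ t, a ≤ t → t * G t ≤ β * ∫ u in Ioi t, G u) :
    MonotoneOn (fun t => t ^ β * ∫ u in Ioi t, G u) (Ici a) := by
  intro x hx y hy hxy
  have hx0 : 0 < x := ha.trans_le hx
  have hGx : IntegrableOn G (Ioi x) := hG.mono_set (Ioi_subset_Ioi hx)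
  have hmono : ∫ t in x..y, t ^ β * G t ≤ β * ∫ t in x..y, t ^ (β - 1) * ∫ u in Ioi t, G u := by
    rw [← intervalIntegral.integral_const_mul]
    refine intervalIntegral.integral_mono_on hxy
      (intervalIntegrable_rpow_mul hx0 hxy (hGx.intervalIntegrable_of_Ioi le_rfl hxy) β)
      ((intervalIntegrable_rpow_mul_integral_Ioi hx0 hxy hGx _).const_mul β) fun t ht => ?_
    have ht0 : 0 < t := hx0.trans_le ht.1
    calc t ^ β * G t = t ^ (β - 1) * (t * G t) := by rw [Real.rpow_sub_one ht0.ne']; field_simp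
      _ ≤ t ^ (β - 1) * (β * ∫ u in Ioi t, G u) :=
          mul_le_mul_of_nonneg_left (hbound t (hx.trans ht.1)) (Real.rpow_nonneg ht0.le _)
      _ = β * (t ^ (β - 1) * ∫ u in Ioi t, G u) := by ring
  have hparts := intervalIntegral_rpow_mul_add_rpow_mul_integral_Ioi hx0 hxy hGx hGc β
  dsimp only
  linarith

theorem tendsto_rpow_mul_integral_Ioi_atTop (hβ : 0 ≤ β) (hG0 : 0 ≤ G)
    (hint : IntegrableOn (fun t => t ^ β * G t) (Ioi a)) :
    Tendsto (fun b => b ^ β * ∫ u in Ioi b, G u) atTop (𝓝 0) := by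
  refine tendsto_of_tendsto_of_tendsto_of_le_of_le' tendsto_const_nhds
    (tendsto_integral_Ioi_zero (μ := volume) (f := fun t => t ^ β * G t) tendsto_id) ?_ ?_
  · filter_upwards [eventually_ge_atTop 0] with b hb
    exact mul_nonneg (Real.rpow_nonneg hb β)
      (setIntegral_nonneg measurableSet_Ioi fun u _ => hG0 u)
  · filter_upwards [eventually_ge_atTop 0, eventually_ge_atTop a] with b hb hab
    rw [← integral_const_mul]
    refine integral_mono_of_nonneg ?_ (hint.mono_set (Ioi_subset_Ioi hab)) ?_ <;>
      filter_upwards [ae_restrict_mem measurableSet_Ioi] with u hu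
    · exact mul_nonneg (Real.rpow_nonneg hb β) (hG0 u)
    · exact mul_le_mul_of_nonneg_right (Real.rpow_le_rpow hb (le_of_lt hu) hβ) (hG0 u)

end TailIntegral

section GeneralizedMRD

variable {G : ℝ → ℝ} {β γ : ℝ}

theorem integrableOn_rpow_mul_of_tendsto_lt_one_div (hβ : 0 < β) (hG : IntegrableOn G (Ioi 0))
    (hG0 : 0 ≤ G) (hGpos : ∀ x, 0 < x → 0 < G x) (hGc : ∀ x, ContinuousWithinAt G (Ici x) x)
    (hγ : Tendsto (fun x => (∫ u in Ioi x, G u) / G x / x) atTop (𝓝 γ)) (hγβ : γ < 1 / β) :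
    IntegrableOn (fun t => t ^ β * G t) (Ioi 0) := by
  obtain ⟨δ, hγδ, hδβ⟩ := exists_between hγβ
  obtain ⟨a, ha⟩ := eventually_atTop.1
    ((hγ.eventually (gt_mem_nhds hγδ)).and (eventually_gt_atTop 0))
  have ha0 : 0 < a := (ha a le_rfl).2
  have hbound (t : ℝ) (ht : a ≤ t) : ∫ u in Ioi t, G u ≤ δ * t * G t := by
    obtain ⟨hlt, ht0⟩ := ha t ht
    rw [div_div, div_lt_iff₀ (mul_pos (hGpos t ht0) ht0)] at hlt
    linarith
  have hsmall : IntegrableOn (fun t => t ^ β * G t) (Ioc 0 a) :=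
    (intervalIntegrable_iff_integrableOn_Ioc_of_le ha0.le).1 <|
      (hG.intervalIntegrable_of_Ioi le_rfl ha0.le).continuousOn_mul
        (continuousOn_id.rpow_const fun _ _ => Or.inr hβ.le)
  have hlarge : IntegrableOn (fun t => t ^ β * G t) (Ioi a) :=
    integrableOn_rpow_mul_of_integral_Ioi_le ha0 hβ.le (by rwa [lt_div_iff₀ hβ, mul_comm] at hδβ)
      (hG.mono_set (Ioi_subset_Ioi ha0.le)) hG0 hGc hbound
  rw [← Ioc_union_Ioi_eq_Ioi ha0.le]
  exact hsmall.union hlarge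

theorem lt_one_div_of_integrableOn_rpow_mul (hβ : 0 < β) (hG : IntegrableOn G (Ioi 0))
    (hG0 : 0 ≤ G) (hGpos : ∀ x, 0 < x → 0 < G x) (hGc : ∀ x, ContinuousWithinAt G (Ici x) x)
    (he : AntitoneOn (fun x => (∫ u in Ioi x, G u) / G x / x) (Ioi 0))
    (hγ : Tendsto (fun x => (∫ u in Ioi x, G u) / G x / x) atTop (𝓝 γ))
    (hint : IntegrableOn (fun t => t ^ β * G t) (Ioi 0)) :
    γ < 1 / β := by
  by_contra! hγβ
  have hbound (t : ℝ) (ht : 1 ≤ t) : t * G t ≤ β * ∫ u in Ioi t, G u := by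
    have ht0 : 0 < t := one_pos.trans_le ht
    have : 1 / β ≤ (∫ u in Ioi t, G u) / G t / t := hγβ.trans <| le_of_tendsto hγ <|
      eventually_atTop.2 ⟨t, fun y hy => he ht0 (ht0.trans_le hy) hy⟩
    rw [div_div, div_le_div_iff₀ hβ (mul_pos (hGpos t ht0) ht0)] at this
    linarith
  have hL1 : 0 < ∫ u in Ioi 1, G u := by
    have := hbound 1 le_rfl
    rw [one_mul] at this
    exact pos_of_mul_pos_right ((hGpos 1 one_pos).trans_le this) hβ.le
  have hmono := monotoneOn_rpow_mul_integral_Ioi one_pos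
    (hG.mono_set (Ioi_subset_Ioi zero_le_one)) hGc hbound
  have := ge_of_tendsto (tendsto_rpow_mul_integral_Ioi_atTop hβ.le hG0 hint)
    (eventually_atTop.2 ⟨1, fun b hb => hmono self_mem_Ici hb hb⟩)
  simp only [Real.one_rpow, one_mul] at this
  linarith

end GeneralizedMRD

theorem ofReal_one_sub_cdf (ν : Measure ℝ) [IsProbabilityMeasure ν] (x : ℝ) :
    ENNReal.ofReal (1 - cdf ν x) = ν (Ioi x) := by
  rw [← compl_Iic, prob_compl_eq_one_sub measurableSet_Iic, ← ofReal_cdf,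
    ENNReal.ofReal_sub _ (cdf_nonneg ν x), ENNReal.ofReal_one]

section RandomVariable

variable {Ω : Type*} [MeasurableSpace Ω] {μ : Measure Ω} [IsProbabilityMeasure μ] {X : Ω → ℝ}

theorem cdf_map_apply (hX : Measurable X) (x : ℝ) :
    cdf (μ.map X) x = (μ {ω | X ω ≤ x}).toReal := by
  have := Measure.isProbabilityMeasure_map (μ := μ) hX.aemeasurable
  rw [cdf_eq_real, measureReal_def, Measure.map_apply hX measurableSet_Iic]
  rfl

theorem integrable_rpow_iff_integrableOn_rpow_mul_one_sub_cdf (hX : Measurable X)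
    (hX0 : 0 ≤ᵐ[μ] X) {p : ℝ} (hp : 0 < p) :
    Integrable (fun ω => X ω ^ p) μ ↔
      IntegrableOn (fun t => t ^ (p - 1) * (1 - cdf (μ.map X) t)) (Ioi 0) := by
  have := Measure.isProbabilityMeasure_map (μ := μ) hX.aemeasurable
  have hmeas : Measurable fun t : ℝ => t ^ (p - 1) * (1 - cdf (μ.map X) t) :=
    (measurable_id.pow_const _).mul (measurable_const.sub (cdf _).mono.measurable)
  rw [← lintegral_ofReal_ne_top_iff_integrable (hX.pow_const p).aestronglyMeasurable
      (hX0.mono fun ω hω => Real.rpow_nonneg hω p),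
    IntegrableOn, ← lintegral_ofReal_ne_top_iff_integrable hmeas.aestronglyMeasurable
      (ae_restrict_of_forall_mem measurableSet_Ioi fun t ht =>
        mul_nonneg (Real.rpow_nonneg (le_of_lt ht) _) (sub_nonneg.2 (cdf_le_one _ t))),
    lintegral_rpow_eq_lintegral_meas_lt_mul μ hX0 hX.aemeasurable hp]
  have hlayer : ∫⁻ t in Ioi 0, μ {ω | t < X ω} * ENNReal.ofReal (t ^ (p - 1)) =
      ∫⁻ t in Ioi 0, ENNReal.ofReal (t ^ (p - 1) * (1 - cdf (μ.map X) t)) := by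
    refine setLIntegral_congr_fun measurableSet_Ioi fun t ht => ?_
    rw [ENNReal.ofReal_mul (Real.rpow_nonneg (le_of_lt ht) _), ofReal_one_sub_cdf,
      Measure.map_apply hX measurableSet_Ioi, mul_comm]
    rfl
  simp [hlayer, ENNReal.mul_eq_top, hp]

end RandomVariable

/-- If `α` is DGMRD with `γ = lim_{x→∞} e(x)` where `e(x) = m(x)/x`, then for every
`β > 0`: `γ < 1/β` iff `E[α^(β+1)] < ∞`. -/
theorem stmt8 {Ω : Type*} [MeasurableSpace Ω] (μ : Measure Ω) [IsProbabilityMeasure μ]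
    (α : Ω → ℝ) (hαmeas : Measurable α)
    (hval : ∀ᵐ ω ∂μ, 0 ≤ α ω)
    (hαint : Integrable α μ)
    (F : ℝ → ℝ)
    (hF : ∀ x : ℝ, F x = (μ {ω | α ω ≤ x}).toReal)
    (hFbar : ∀ x : ℝ, 0 ≤ x → 0 < 1 - F x)
    (hDGMRD : ∀ x y : ℝ, 0 < x → x ≤ y → mrd F y / y ≤ mrd F x / x)
    (γ : ℝ) (hγ : Tendsto (fun x : ℝ => mrd F x / x) atTop (𝓝 γ))
    (β : ℝ) (hβ : 0 < β) :
    γ < 1 / β ↔ Integrable (fun ω => α ω ^ (β + 1)) μ := by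
  have := Measure.isProbabilityMeasure_map (μ := μ) hαmeas.aemeasurable
  obtain rfl : F = cdf (μ.map α) := funext fun x => (hF x).trans (cdf_map_apply hαmeas x).symm
  have hGint : IntegrableOn (fun u => 1 - cdf (μ.map α) u) (Ioi 0) := by
    simpa using (integrable_rpow_iff_integrableOn_rpow_mul_one_sub_cdf hαmeas hval one_pos).1
      (by simpa using hαint)
  have hG0 : 0 ≤ fun u => 1 - cdf (μ.map α) u := fun u => sub_nonneg.2 (cdf_le_one _ u)
  have hGc (x : ℝ) : ContinuousWithinAt (fun u => 1 - cdf (μ.map α) u) (Ici x) x :=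
    continuousWithinAt_const.sub ((cdf _).right_continuous x)
  have hGpos (x : ℝ) (hx : 0 < x) : 0 < 1 - cdf (μ.map α) x := hFbar x hx.le
  rw [integrable_rpow_iff_integrableOn_rpow_mul_one_sub_cdf hαmeas hval (by positivity),
    add_sub_cancel_right]
  exact ⟨integrableOn_rpow_mul_of_tendsto_lt_one_div hβ hGint hG0 hGpos hGc hγ,
    lt_one_div_of_integrableOn_rpow_mul hβ hGint hG0 hGpos hGc
      (fun x hx y _ hxy => hDGMRD x y hx hxy) hγ⟩
end
end

section
/- Let α be a nonnegative random variable with distribution function F supported on [0,∞), survival function F̄ = 1 - F positive on [0,∞), and finite mean Eα. Suppose α is DGMRD (e(x) = m(x)/x is nonincreasing on (0,∞)) and let γ := lim_{x→∞} e(x). Then γ = 0 if and only if E[α^{β+1}] < ∞ for every β > 0. -/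
open MeasureTheory Set Filter Function Topology

noncomputable section

/-!
Write `S u = P(α > u)` and `T x = ∫_x^∞ S`, so that `m = T / S` and `e x = T x / (x S x)`.
Since `S` is antitone, `(y - x) S y ≤ T x - T y ≤ (y - x) S x` for `x ≤ y`.

If `γ = 0`, then eventually `T x ≤ 2^{-(k+1)} x S x`, and the lower bound turns this into
`T (2x) ≤ 2^{-k} T x`. Hence `T`, and with it `S`, decays faster than every power of `x`, and all
moments are finite by the layer-cake formula.

If `γ > 0`, then `γ x S x ≤ T x` for every `x > 0` because `e` decreases to `γ`, and the upper
bound with `c = 1 + γ/2` gives `T x ≤ 2 T (c x)`, i.e. `T (c^n) ≥ 2^{-n} T 1`. Markov's inequality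
gives `T x ≤ E[α^{β+1}] x^{-β} / β`; for `c^β = 4` the two bounds force `T 1 = 0`, whereas
`T 1 ≥ γ S 1 > 0`.
-/

def tailIntegral (f : ℝ → ℝ) (x : ℝ) : ℝ := ∫ u in Ioi x, f u

theorem le_mul_div_pow_of_two_mul_le {g : ℝ → ℝ} {x₀ z : ℝ} (k : ℕ) (hx₀ : 0 < x₀)
    (hg : AntitoneOn g (Ici x₀)) (hg0 : 0 ≤ g x₀)
    (h : ∀ z, x₀ ≤ z → g (2 * z) ≤ (2 ^ k)⁻¹ * g z) (hz : x₀ ≤ z) :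
    g z ≤ (2 * x₀ / z) ^ k * g x₀ := by
  have hle : ∀ n : ℕ, x₀ ≤ 2 ^ n * x₀ := fun n =>
    le_mul_of_one_le_left hx₀.le (one_le_pow₀ one_le_two)
  have hpow : ∀ n : ℕ, g (2 ^ n * x₀) ≤ ((2 ^ k)⁻¹) ^ n * g x₀ := by
    intro n
    induction n with
    | zero => simp
    | succ n ih =>
      calc g (2 ^ (n + 1) * x₀) = g (2 * (2 ^ n * x₀)) := by ring_nf
        _ ≤ (2 ^ k)⁻¹ * g (2 ^ n * x₀) := h _ (hle n)
        _ ≤ (2 ^ k)⁻¹ * (((2 ^ k)⁻¹) ^ n * g x₀) := by gcongr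
        _ = ((2 ^ k)⁻¹) ^ (n + 1) * g x₀ := by ring
  obtain ⟨n, hn, hn'⟩ := exists_nat_pow_near ((one_le_div hx₀).2 hz) one_lt_two
  have hz0 : 0 < z := hx₀.trans_le hz
  rw [le_div_iff₀ hx₀] at hn
  rw [div_lt_iff₀ hx₀, pow_succ] at hn'
  have hinv : (2 ^ n : ℝ)⁻¹ ≤ 2 * x₀ / z := by
    rw [le_div_iff₀ hz0, inv_mul_le_iff₀ (by positivity)]
    linarith
  calc g z ≤ g (2 ^ n * x₀) := hg (hle n) hz hn
    _ ≤ ((2 ^ k)⁻¹) ^ n * g x₀ := hpow n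
    _ = ((2 ^ n)⁻¹) ^ k * g x₀ := by rw [inv_pow, inv_pow, ← pow_mul, ← pow_mul, mul_comm k n]
    _ ≤ (2 * x₀ / z) ^ k * g x₀ := by gcongr

section TailIntegral

variable {f : ℝ → ℝ} {x y z γ ε : ℝ}

theorem tailIntegral_nonneg (hf0 : ∀ u, 0 ≤ f u) : 0 ≤ tailIntegral f x :=
  setIntegral_nonneg measurableSet_Ioi fun u _ => hf0 u

theorem antitoneOn_tailIntegral (hf0 : ∀ u, 0 ≤ f u) (hi : IntegrableOn f (Ioi x)) :
    AntitoneOn (tailIntegral f) (Ici x) := fun a ha b _ hab => by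
  have h := intervalIntegral.integral_Ioi_sub_Ioi (hi.mono_set (Ioi_subset_Ioi ha)) hab
  have := intervalIntegral.integral_nonneg (μ := volume) hab fun u _ => hf0 u
  unfold tailIntegral
  linarith

theorem mul_le_tailIntegral_sub (hf : Antitone f) (hi : IntegrableOn f (Ioi x)) (hxy : x ≤ y) :
    (y - x) * f y ≤ tailIntegral f x - tailIntegral f y := by
  rw [tailIntegral, tailIntegral, intervalIntegral.integral_Ioi_sub_Ioi hi hxy,
    ← smul_eq_mul, ← intervalIntegral.integral_const]
  exact intervalIntegral.integral_mono_on hxy intervalIntegrable_const hf.intervalIntegrable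
    fun u hu => hf hu.2

theorem tailIntegral_sub_le_mul (hf : Antitone f) (hi : IntegrableOn f (Ioi x)) (hxy : x ≤ y) :
    tailIntegral f x - tailIntegral f y ≤ (y - x) * f x := by
  rw [tailIntegral, tailIntegral, intervalIntegral.integral_Ioi_sub_Ioi hi hxy,
    ← smul_eq_mul, ← intervalIntegral.integral_const]
  exact intervalIntegral.integral_mono_on hxy hf.intervalIntegrable intervalIntegrable_const
    fun u hu => hf hu.1

theorem tailIntegral_two_mul_le (hf : Antitone f) (hf0 : ∀ u, 0 ≤ f u)
    (hi : IntegrableOn f (Ioi z)) (hz : 0 ≤ z) (hε : 0 ≤ ε)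
    (h : tailIntegral f (2 * z) ≤ ε * (2 * z) * f (2 * z)) :
    tailIntegral f (2 * z) ≤ 2 * ε * tailIntegral f z := by
  have hstep := mul_le_tailIntegral_sub hf hi (by linarith : z ≤ 2 * z)
  have hT := tailIntegral_nonneg (x := 2 * z) hf0
  calc tailIntegral f (2 * z) ≤ 2 * ε * ((2 * z - z) * f (2 * z)) := by linarith
    _ ≤ 2 * ε * (tailIntegral f z - tailIntegral f (2 * z)) := by gcongr
    _ ≤ 2 * ε * tailIntegral f z := by gcongr; linarith

theorem tailIntegral_le_two_mul_tailIntegral (hf : Antitone f) (hi : IntegrableOn f (Ioi x))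
    (hx : 0 ≤ x) (hγ : 0 ≤ γ) (h : γ * x * f x ≤ tailIntegral f x) :
    tailIntegral f x ≤ 2 * tailIntegral f ((1 + γ / 2) * x) := by
  have hstep := tailIntegral_sub_le_mul hf hi (by nlinarith : x ≤ (1 + γ / 2) * x)
  have : ((1 + γ / 2) * x - x) * f x = γ * x * f x / 2 := by ring
  linarith

theorem eventually_tailIntegral_le_of_tendsto_zero (hpos : ∀ x, 0 < x → 0 < f x)
    (h : Tendsto (fun x => tailIntegral f x / f x / x) atTop (𝓝 0)) :
    ∀ ε > 0, ∀ᶠ x in atTop, tailIntegral f x ≤ ε * x * f x := fun ε hε => by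
  filter_upwards [h.eventually (gt_mem_nhds hε), eventually_gt_atTop 0] with x hx hx0
  rw [div_div, div_lt_iff₀ (mul_pos (hpos x hx0) hx0)] at hx
  linarith

theorem mul_le_tailIntegral_of_tendsto (hpos : ∀ x, 0 < x → 0 < f x)
    (hanti : ∀ x y, 0 < x → x ≤ y →
      tailIntegral f y / f y / y ≤ tailIntegral f x / f x / x)
    (h : Tendsto (fun x => tailIntegral f x / f x / x) atTop (𝓝 γ)) (hx : 0 < x) :
    γ * x * f x ≤ tailIntegral f x := by
  have he : γ ≤ tailIntegral f x / f x / x :=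
    le_of_tendsto h ((eventually_ge_atTop x).mono fun y hy => hanti x y hx hy)
  rwa [div_div, le_div_iff₀ (mul_pos (hpos x hx) hx), mul_comm (f x), ← mul_assoc] at he

theorem exists_le_mul_rpow_neg_of_tailIntegral_le (hf : Antitone f) (hf0 : ∀ u, 0 ≤ f u)
    (hi : IntegrableOn f (Ioi 0))
    (h : ∀ ε > 0, ∀ᶠ x in atTop, tailIntegral f x ≤ ε * x * f x) (k : ℕ) :
    ∃ C c, 0 < c ∧ ∀ t, c ≤ t → f t ≤ C * t ^ (-(k + 1 : ℝ)) := by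
  obtain ⟨x₀, hx₀⟩ := eventually_atTop.1
    ((h (2 ^ (k + 1))⁻¹ (by positivity)).and (eventually_gt_atTop 0))
  have hx₀pos : 0 < x₀ := (hx₀ x₀ le_rfl).2
  have hi' : ∀ z, 0 ≤ z → IntegrableOn f (Ioi z) := fun z hz => hi.mono_set (Ioi_subset_Ioi hz)
  have hdouble : ∀ z, x₀ ≤ z → tailIntegral f (2 * z) ≤ (2 ^ k)⁻¹ * tailIntegral f z := by
    intro z hz
    calc tailIntegral f (2 * z) ≤ 2 * (2 ^ (k + 1))⁻¹ * tailIntegral f z :=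
          tailIntegral_two_mul_le hf hf0 (hi' z (by linarith)) (by linarith) (by positivity)
            (hx₀ (2 * z) (by linarith)).1
      _ = (2 ^ k)⁻¹ * tailIntegral f z := by rw [pow_succ, mul_inv]; ring
  have hdecay : ∀ z, x₀ ≤ z → tailIntegral f z ≤ (2 * x₀ / z) ^ k * tailIntegral f x₀ :=
    fun z hz => le_mul_div_pow_of_two_mul_le k hx₀pos
      (antitoneOn_tailIntegral hf0 (hi' x₀ hx₀pos.le)) (tailIntegral_nonneg hf0) hdouble hz
  refine ⟨2 * (4 * x₀) ^ k * tailIntegral f x₀, 2 * x₀, by positivity, fun t ht => ?_⟩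
  have ht0 : 0 < t := by linarith
  have hmid : t / 2 * f t ≤ tailIntegral f (t / 2) := by
    have := mul_le_tailIntegral_sub hf (hi' (t / 2) (by positivity)) (by linarith : t / 2 ≤ t)
    have := tailIntegral_nonneg (x := t) hf0
    linarith
  calc f t ≤ 2 / t * tailIntegral f (t / 2) := by
        rw [div_mul_eq_mul_div, le_div_iff₀ ht0]; linarith
    _ ≤ 2 / t * ((2 * x₀ / (t / 2)) ^ k * tailIntegral f x₀) := by
        gcongr; exact hdecay _ (by linarith)
    _ = 2 * (4 * x₀) ^ k * tailIntegral f x₀ * t ^ (-(k + 1 : ℝ)) := by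
        rw [Real.rpow_neg ht0.le, show (k + 1 : ℝ) = ((k + 1 : ℕ) : ℝ) by push_cast; ring,
          Real.rpow_natCast, show 2 * x₀ / (t / 2) = 4 * x₀ / t by field_simp; ring, div_pow,
          pow_succ]
        field_simp

theorem tailIntegral_one_nonpos_of_forall_le_rpow (hf : Antitone f) (hi : IntegrableOn f (Ioi 0))
    (hγ : 0 < γ) (hlow : ∀ x, 0 < x → γ * x * f x ≤ tailIntegral f x)
    (hup : ∀ β : ℝ, 0 < β → ∃ C, ∀ x, 0 < x → tailIntegral f x ≤ C * x ^ (-β)) :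
    tailIntegral f 1 ≤ 0 := by
  set c := 1 + γ / 2
  have hc : 1 < c := by simp only [c]; linarith
  have hgeom : ∀ n : ℕ, tailIntegral f 1 ≤ 2 ^ n * tailIntegral f (c ^ n) := by
    intro n
    induction n with
    | zero => simp
    | succ n ih =>
      have hcn : 0 < c ^ n := by positivity
      calc tailIntegral f 1 ≤ 2 ^ n * tailIntegral f (c ^ n) := ih
        _ ≤ 2 ^ n * (2 * tailIntegral f (c * c ^ n)) := by
            gcongr
            exact tailIntegral_le_two_mul_tailIntegral hf (hi.mono_set (Ioi_subset_Ioi hcn.le))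
              hcn.le hγ.le (hlow _ hcn)
        _ = 2 ^ (n + 1) * tailIntegral f (c ^ (n + 1)) := by rw [pow_succ' c, pow_succ]; ring
  -- with `c ^ β = 4`, the bound `C * (c ^ n) ^ (-β)` beats the growth `2 ^ n`
  obtain ⟨C, hC⟩ := hup (Real.logb c 4) (Real.logb_pos hc (by norm_num))
  have hbound : ∀ n : ℕ, tailIntegral f 1 ≤ C * (1 / 2) ^ n := by
    intro n
    have hpow : (c ^ n) ^ (-Real.logb c 4) = ((4 : ℝ) ^ n)⁻¹ := by
      rw [Real.rpow_neg (by positivity), ← Real.rpow_pow_comm (by positivity),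
        Real.rpow_logb (by positivity) hc.ne' (by norm_num)]
    calc tailIntegral f 1 ≤ 2 ^ n * tailIntegral f (c ^ n) := hgeom n
      _ ≤ 2 ^ n * (C * ((4 : ℝ) ^ n)⁻¹) := by
          gcongr; rw [← hpow]; exact hC _ (by positivity)
      _ = C * (1 / 2) ^ n := by
          rw [show (4 : ℝ) = 2 * 2 by norm_num, mul_pow, one_div, inv_pow, mul_inv]; field_simp
  have hlim : Tendsto (fun n : ℕ => C * (1 / 2 : ℝ) ^ n) atTop (𝓝 0) := by
    simpa using (tendsto_pow_atTop_nhds_zero_of_lt_one (r := (1 / 2 : ℝ)) (by norm_num)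
      (by norm_num)).const_mul C
  exact ge_of_tendsto' hlim hbound

end TailIntegral

section Survival

variable {Ω : Type*} [MeasurableSpace Ω] {μ : Measure Ω} {X : Ω → ℝ}

theorem antitone_measureReal_lt [IsFiniteMeasure μ] :
    Antitone fun u => μ.real {ω | u < X ω} :=
  fun _ _ hxy => measureReal_mono fun _ hω => hxy.trans_lt hω

theorem integrableOn_Ioi_measureReal_lt_s9 (hX0 : 0 ≤ᵐ[μ] X) (hX : Integrable X μ) :
    IntegrableOn (fun u => μ.real {ω | u < X ω}) (Ioi 0) := by
  refine integrable_toReal_of_lintegral_ne_top ?_ ?_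
  · have hanti : Antitone fun u : ℝ => μ {ω | u < X ω} :=
      fun _ _ hxy => measure_mono fun _ hω => hxy.trans_lt hω
    exact hanti.measurable.aemeasurable
  · rw [← lintegral_eq_lintegral_meas_lt μ hX0 hX.aemeasurable]
    exact hX.lintegral_lt_top.ne

theorem measureReal_lt_le_integral_rpow_mul [IsFiniteMeasure μ] (hX0 : 0 ≤ᵐ[μ] X) {p : ℝ}
    (hp : 0 ≤ p) (hint : Integrable (fun ω => X ω ^ p) μ) {u : ℝ} (hu : 0 < u) :
    μ.real {ω | u < X ω} ≤ (∫ ω, X ω ^ p ∂μ) * u ^ (-p) := by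
  have hmarkov := mul_meas_ge_le_integral_of_nonneg
    (hX0.mono fun ω hω => Real.rpow_nonneg hω p) hint (u ^ p)
  have hsub : μ.real {ω | u < X ω} ≤ μ.real {ω | u ^ p ≤ X ω ^ p} :=
    measureReal_mono fun ω (hω : u < X ω) => Real.rpow_le_rpow hu.le hω.le hp
  rw [Real.rpow_neg hu.le, ← div_eq_mul_inv, le_div_iff₀ (by positivity), mul_comm]
  exact (mul_le_mul_of_nonneg_left hsub (by positivity)).trans hmarkov

theorem tailIntegral_measureReal_lt_le [IsFiniteMeasure μ] (hX0 : 0 ≤ᵐ[μ] X) {β : ℝ}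
    (hβ : 0 < β) (hint : Integrable (fun ω => X ω ^ (β + 1)) μ) {x : ℝ} (hx : 0 < x) :
    tailIntegral (fun u => μ.real {ω | u < X ω}) x
      ≤ (∫ ω, X ω ^ (β + 1) ∂μ) / β * x ^ (-β) := by
  set M := ∫ ω, X ω ^ (β + 1) ∂μ
  have hmaj : IntegrableOn (fun u => M * u ^ (-(β + 1))) (Ioi x) :=
    (integrableOn_Ioi_rpow_of_lt (by linarith) hx).const_mul M
  have hmarkov : ∀ u ∈ Ioi x, μ.real {ω | u < X ω} ≤ M * u ^ (-(β + 1)) :=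
    fun u hu => measureReal_lt_le_integral_rpow_mul hX0 (by linarith) hint (hx.trans hu)
  have hint' : IntegrableOn (fun u => μ.real {ω | u < X ω}) (Ioi x) :=
    hmaj.mono' antitone_measureReal_lt.measurable.aestronglyMeasurable
      ((ae_restrict_iff' measurableSet_Ioi).2 (ae_of_all _ fun u hu => by
        rw [Real.norm_of_nonneg measureReal_nonneg]; exact hmarkov u hu))
  calc tailIntegral (fun u => μ.real {ω | u < X ω}) x ≤ ∫ u in Ioi x, M * u ^ (-(β + 1)) :=
        setIntegral_mono_on hint' hmaj measurableSet_Ioi hmarkov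
    _ = M / β * x ^ (-β) := by
        rw [integral_const_mul, integral_Ioi_rpow_of_lt (by linarith) hx,
          show -(β + 1) + 1 = -β by ring]
        field_simp

theorem integrableOn_Ioi_measureReal_lt_mul_rpow [IsFiniteMeasure μ] {r p C c : ℝ} (hr : 0 < r)
    (hrp : r < p) (hc : 0 < c) (hdecay : ∀ t, c ≤ t → μ.real {ω | t < X ω} ≤ C * t ^ (-p)) :
    IntegrableOn (fun t => μ.real {ω | t < X ω} * t ^ (r - 1)) (Ioi 0) := by
  set S := fun t : ℝ => μ.real {ω | t < X ω}
  have hmeas : AEStronglyMeasurable (fun t => S t * t ^ (r - 1)) (volume.restrict (Ioi 0)) :=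
    (antitone_measureReal_lt.measurable.mul (by fun_prop)).aestronglyMeasurable
  have hnorm : ∀ t, 0 < t → ‖S t * t ^ (r - 1)‖ = S t * t ^ (r - 1) := fun t ht =>
    Real.norm_of_nonneg (mul_nonneg measureReal_nonneg (Real.rpow_nonneg ht.le _))
  rw [← Ioc_union_Ioi_eq_Ioi hc.le]
  refine IntegrableOn.union ?_ ?_
  · have hbound : IntegrableOn (fun t : ℝ => μ.real univ * t ^ (r - 1)) (Ioc 0 c) :=
      ((intervalIntegrable_iff_integrableOn_Ioc_of_le hc.le).1
        (intervalIntegral.intervalIntegrable_rpow' (by linarith))).const_mul _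
    refine hbound.mono' (hmeas.mono_set Ioc_subset_Ioi_self)
      ((ae_restrict_iff' measurableSet_Ioc).2 (ae_of_all _ fun t ht => ?_))
    rw [hnorm t ht.1]
    exact mul_le_mul_of_nonneg_right (measureReal_mono (subset_univ _))
      (Real.rpow_nonneg ht.1.le _)
  · have hbound : IntegrableOn (fun t : ℝ => C * t ^ (r - 1 - p)) (Ioi c) :=
      (integrableOn_Ioi_rpow_of_lt (by linarith) hc).const_mul C
    refine hbound.mono' (hmeas.mono_set (Ioi_subset_Ioi hc.le))
      ((ae_restrict_iff' measurableSet_Ioi).2 (ae_of_all _ fun t ht => ?_))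
    have ht0 : 0 < t := hc.trans ht
    calc ‖S t * t ^ (r - 1)‖ = S t * t ^ (r - 1) := hnorm t ht0
      _ ≤ C * t ^ (-p) * t ^ (r - 1) := by gcongr; exact hdecay t ht.le
      _ = C * t ^ (r - 1 - p) := by rw [sub_eq_add_neg (r - 1), Real.rpow_add ht0]; ring

theorem integrable_rpow_of_measureReal_lt_le [IsFiniteMeasure μ] (hX0 : 0 ≤ᵐ[μ] X)
    (hX : AEMeasurable X μ) {r p C c : ℝ} (hr : 0 < r) (hrp : r < p) (hc : 0 < c)
    (hdecay : ∀ t, c ≤ t → μ.real {ω | t < X ω} ≤ C * t ^ (-p)) :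
    Integrable (fun ω => X ω ^ r) μ := by
  refine ⟨(hX.pow_const r).aestronglyMeasurable, ?_⟩
  rw [hasFiniteIntegral_iff_ofReal (hX0.mono fun ω hω => Real.rpow_nonneg hω r),
    lintegral_rpow_eq_lintegral_meas_lt_mul μ hX0 hX hr]
  have hlayer : ∫⁻ t in Ioi 0, μ {ω | t < X ω} * ENNReal.ofReal (t ^ (r - 1))
      = ∫⁻ t in Ioi 0, ENNReal.ofReal (μ.real {ω | t < X ω} * t ^ (r - 1)) := by
    refine setLIntegral_congr_fun measurableSet_Ioi fun t _ => ?_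
    rw [ENNReal.ofReal_mul measureReal_nonneg, ofReal_measureReal]
  rw [hlayer]
  exact ENNReal.mul_lt_top ENNReal.ofReal_lt_top
    (integrableOn_Ioi_measureReal_lt_mul_rpow hr hrp hc hdecay).lintegral_lt_top

end Survival

/-- If `α` is DGMRD with `γ = lim_{x→∞} e(x)` where `e(x) = m(x)/x`, then `γ = 0` iff
`E[α^(β+1)] < ∞` for every `β > 0`. -/
theorem stmt9 {Ω : Type*} [MeasurableSpace Ω] (μ : Measure Ω) [IsProbabilityMeasure μ]
    (α : Ω → ℝ) (hαmeas : Measurable α)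
    (hval : ∀ᵐ ω ∂μ, 0 ≤ α ω)
    (hαint : Integrable α μ)
    (F : ℝ → ℝ)
    (hF : ∀ x : ℝ, F x = (μ {ω | α ω ≤ x}).toReal)
    (hFbar : ∀ x : ℝ, 0 ≤ x → 0 < 1 - F x)
    (hDGMRD : ∀ x y : ℝ, 0 < x → x ≤ y → mrd F y / y ≤ mrd F x / x)
    (γ : ℝ) (hγ : Tendsto (fun x : ℝ => mrd F x / x) atTop (𝓝 γ))
    :
    γ = 0 ↔ ∀ β : ℝ, 0 < β → Integrable (fun ω => α ω ^ (β + 1)) μ := by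
  set S := fun u => μ.real {ω | u < α ω}
  have hFS : ∀ u, 1 - F u = S u := fun u => by
    rw [hF, ← measureReal_def,
      ← probReal_compl_eq_one_sub (measurableSet_le hαmeas measurable_const)]
    simp only [S, compl_ofPred, not_le]
  have hmrd : ∀ x, mrd F x = tailIntegral S x / S x := fun x => by
    simp only [mrd, tailIntegral, hFS]
  simp only [hmrd] at hγ hDGMRD
  have hS0 : ∀ u, 0 ≤ S u := fun _ => measureReal_nonneg
  have hSpos : ∀ x, 0 < x → 0 < S x := fun x hx => hFS x ▸ hFbar x hx.le
  have hSi := integrableOn_Ioi_measureReal_lt_s9 hval hαint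
  constructor
  · rintro rfl β hβ
    obtain ⟨k, hk⟩ := exists_nat_gt β
    obtain ⟨C, c, hc, hdecay⟩ := exists_le_mul_rpow_neg_of_tailIntegral_le antitone_measureReal_lt
      hS0 hSi (eventually_tailIntegral_le_of_tendsto_zero hSpos hγ) k
    exact integrable_rpow_of_measureReal_lt_le hval hαmeas.aemeasurable (by linarith)
      (by linarith) hc hdecay
  · intro hmom
    have hγ0 : 0 ≤ γ := ge_of_tendsto hγ <| (eventually_gt_atTop 0).mono fun x hx =>
      div_nonneg (div_nonneg (tailIntegral_nonneg hS0) (hS0 x)) hx.le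
    refine le_antisymm (not_lt.1 fun hγpos => ?_) hγ0
    have hlow := fun x (hx : 0 < x) => mul_le_tailIntegral_of_tendsto hSpos hDGMRD hγ hx
    have hT1 := tailIntegral_one_nonpos_of_forall_le_rpow antitone_measureReal_lt hSi hγpos hlow
      fun β hβ => ⟨_, fun x hx => tailIntegral_measureReal_lt_le hval hβ (hmom β hβ) hx⟩
    nlinarith [hlow 1 one_pos, hSpos 1 one_pos]
end
end

section
/- Let α be a nonnegative random variable taking values in [0,H) (0 < H ≤ ∞) with absolutely continuous distribution function F, density f, survival function F̄ = 1 - F positive on [0,H), and finite mean. If α is IGFR (g(x) = x f(x)/F̄(x) is nondecreasing on (0,H)), then α is DGMRD (e(x) = m(x)/x is nonincreasing on (0,H)). -/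
open MeasureTheory Set Filter Function Topology

noncomputable section

/-- If `α` is IGFR, then `α` is DGMRD: if `g(x) = x f(x)/F̄(x)` is nondecreasing on
`(0,H)`, then `e(x) = m(x)/x` is nonincreasing on `(0,H)`. -/
theorem stmt10 {Ω : Type*} [MeasurableSpace Ω] (μ : Measure Ω) [IsProbabilityMeasure μ]
    (α : Ω → ℝ) (hαmeas : Measurable α)
    (H : EReal) (hH : 0 < H)
    (hval : ∀ᵐ ω ∂μ, 0 ≤ α ω ∧ (α ω : EReal) < H)
    (hαint : Integrable α μ)
    (F f : ℝ → ℝ)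
    (hF : ∀ x : ℝ, F x = (μ {ω | α ω ≤ x}).toReal)
    (hfmeas : Measurable f) (hfnonneg : ∀ x, 0 ≤ f x) (hfint : Integrable f)
    (hdens : ∀ x : ℝ, F x = ∫ u in Iic x, f u)
    (hFbar : ∀ x : ℝ, 0 ≤ x → (x : EReal) < H → 0 < 1 - F x)
    (hIGFR : ∀ x y : ℝ, 0 < x → x ≤ y → (y : EReal) < H →
      x * f x / (1 - F x) ≤ y * f y / (1 - F y)) :
    ∀ x y : ℝ, 0 < x → x ≤ y → (y : EReal) < H → mrd F y / y ≤ mrd F x / x := by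
  -- Basic properties of the survival function `G u = 1 - F u`.
  have hFmono : Monotone F := by
    intro a b hab
    rw [hF a, hF b]
    exact ENNReal.toReal_mono (measure_ne_top μ _)
      (measure_mono fun ω h => le_trans h hab)
  have hGeq : ∀ u : ℝ, 1 - F u = (μ {ω | u < α ω}).toReal := by
    intro u
    have hms : MeasurableSet {ω | α ω ≤ u} := hαmeas measurableSet_Iic
    have hcompl : {ω | u < α ω} = {ω | α ω ≤ u}ᶜ := by
      ext ω; simp [not_le]
    rw [hcompl, prob_compl_eq_one_sub hms, hF u,
      ENNReal.toReal_sub_of_le prob_le_one (by simp), ENNReal.toReal_one]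
  have hGnonneg : ∀ u : ℝ, 0 ≤ 1 - F u := by
    intro u; rw [hGeq u]; positivity
  have hGanti : Antitone fun u : ℝ => 1 - F u := by
    intro a b hab
    simp only
    linarith [hFmono hab]
  have hGposlt : ∀ u : ℝ, 0 < 1 - F u → (u : EReal) < H := by
    intro u hu
    by_contra hcon
    have hHu : H ≤ (u : EReal) := not_lt.mp hcon
    have hnull : μ {ω | u < α ω} = 0 := by
      rw [measure_eq_zero_iff_ae_notMem]
      filter_upwards [hval] with ω hω
      intro hmem
      have h1 : (α ω : EReal) < (u : EReal) := lt_of_lt_of_le hω.2 hHu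
      have h2 : α ω < u := EReal.coe_lt_coe_iff.mp h1
      exact absurd hmem (not_lt.mpr h2.le)
    rw [hGeq u, hnull] at hu
    simp at hu
  have hFTC : ∀ a b : ℝ, F b - F a = ∫ r in a..b, f r := by
    intro a b
    rw [hdens a, hdens b]
    exact intervalIntegral.integral_Iic_sub_Iic hfint.integrableOn hfint.integrableOn
  -- Integrability of the survival function on `Ioi c` for `c ≥ 0`.
  have hGint : ∀ c : ℝ, 0 ≤ c → IntegrableOn (fun u : ℝ => 1 - F u) (Ioi c) := by
    intro c hc
    have hmble : Measurable fun t : ℝ => μ {ω | t < α ω} := by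
      apply Antitone.measurable
      intro a b hab
      exact measure_mono fun ω h => lt_of_le_of_lt hab h
    have hne : ∫⁻ t in Ioi 0, μ {ω | t < α ω} ≠ ⊤ := by
      rw [← lintegral_eq_lintegral_meas_lt μ (hval.mono fun ω h => h.1) hαmeas.aemeasurable]
      exact ne_of_lt ((hasFiniteIntegral_iff_ofReal
        (hval.mono fun ω h => h.1)).mp hαint.hasFiniteIntegral)
    have hInt0 : Integrable (fun t => (μ {ω | t < α ω}).toReal)
        (volume.restrict (Ioi (0:ℝ))) :=
      integrable_toReal_of_lintegral_ne_top hmble.aemeasurable.restrict hne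
    have h0 : IntegrableOn (fun u : ℝ => 1 - F u) (Ioi 0) := by
      refine (integrable_congr ?_).mpr hInt0
      exact Eventually.of_forall fun u => hGeq u
    exact h0.mono_set (Ioi_subset_Ioi hc)
  -- The key inequality (log-supermodularity of the survival function).
  have star : ∀ x y t : ℝ, 0 < x → x ≤ y → (y : EReal) < H → 1 ≤ t →
      (1 - F (y * t)) * (1 - F x) ≤ (1 - F (x * t)) * (1 - F y) := by
    intro x y t hx hxy hyH ht
    have hy : 0 < y := lt_of_lt_of_le hx hxy
    rcases eq_or_lt_of_le (hGnonneg (y * t)) with h0 | hGyt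
    · rw [← h0, zero_mul]
      exact mul_nonneg (hGnonneg _) (hGnonneg _)
    have hposle : ∀ r : ℝ, r ≤ y * t → 0 < 1 - F r :=
      fun r hr => lt_of_lt_of_le hGyt (hGanti hr)
    have hytH : ((y * t : ℝ) : EReal) < H := hGposlt _ hGyt
    set Gx := 1 - F x with hGxdef
    set Gy := 1 - F y with hGydef
    set Δ : ℝ → ℝ := fun s => Gy * (1 - F (x * s)) - Gx * (1 - F (y * s)) with hΔdef
    set hfun : ℝ → ℝ := fun r => Gx * y * f (y * r) - Gy * x * f (x * r) with hhdef
    have hintx : Integrable fun r : ℝ => f (x * r) :=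
      (integrable_comp_mul_left_iff f hx.ne').mpr hfint
    have hinty : Integrable fun r : ℝ => f (y * r) :=
      (integrable_comp_mul_left_iff f hy.ne').mpr hfint
    have hint : Integrable hfun := by
      exact ((hinty.const_mul (Gx * y))).sub ((hintx.const_mul (Gy * x)))
    have hΔdiff : ∀ s₁ s₂ : ℝ, Δ s₂ - Δ s₁ = ∫ r in s₁..s₂, hfun r := by
      intro s₁ s₂
      have keyx : F (x * s₂) - F (x * s₁) = x * ∫ r in s₁..s₂, f (x * r) := by
        rw [hFTC (x * s₁) (x * s₂), ← intervalIntegral.smul_integral_comp_mul_left f x,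
          smul_eq_mul]
      have keyy : F (y * s₂) - F (y * s₁) = y * ∫ r in s₁..s₂, f (y * r) := by
        rw [hFTC (y * s₁) (y * s₂), ← intervalIntegral.smul_integral_comp_mul_left f y,
          smul_eq_mul]
      have hi : ∫ r in s₁..s₂, hfun r =
          Gx * y * (∫ r in s₁..s₂, f (y * r)) - Gy * x * (∫ r in s₁..s₂, f (x * r)) := by
        simp only [hhdef]
        rw [intervalIntegral.integral_sub
            ((hinty.const_mul (Gx * y)).intervalIntegrable)
            ((hintx.const_mul (Gy * x)).intervalIntegrable),
          intervalIntegral.integral_const_mul, intervalIntegral.integral_const_mul]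
      rw [hi]
      simp only [hΔdef]
      linear_combination Gx * keyy - Gy * keyx
    have hΔ1 : Δ 1 = 0 := by
      simp only [hΔdef, mul_one]
      ring
    have hΔeq : ∀ s : ℝ, Δ s = ∫ r in (1:ℝ)..s, hfun r := by
      intro s
      have := hΔdiff 1 s
      rw [hΔ1] at this
      linarith
    have hΔcont : Continuous Δ :=
      (intervalIntegral.continuous_primitive (fun a b => hint.intervalIntegrable) 1).congr
        fun s => (hΔeq s).symm
    have hΔt : 0 ≤ Δ t := by
      by_contra hneg0
      push_neg at hneg0
      set S := {s : ℝ | s ∈ Icc 1 t ∧ 0 ≤ Δ s} with hSdef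
      have hSne : S.Nonempty := ⟨1, ⟨le_refl 1, ht⟩, hΔ1.ge⟩
      have hSbdd : BddAbove S := ⟨t, fun s hs => hs.1.2⟩
      have hSclosed : IsClosed S := by
        have : S = Icc 1 t ∩ Δ ⁻¹' Ici 0 := by
          ext s; simp [hSdef, Set.mem_preimage, and_assoc]
        rw [this]
        exact isClosed_Icc.inter (isClosed_Ici.preimage hΔcont)
      set s₀ := sSup S with hs₀def
      have hs₀mem : s₀ ∈ S := hSclosed.csSup_mem hSne hSbdd
      have hs₀t : s₀ ≤ t := hs₀mem.1.2
      have h1s₀ : 1 ≤ s₀ := hs₀mem.1.1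
      have hs₀lt : s₀ < t := by
        rcases lt_or_eq_of_le hs₀t with h | h
        · exact h
        · exfalso; rw [h] at hs₀mem; linarith [hs₀mem.2]
      have hΔneg : ∀ s : ℝ, s₀ < s → s ≤ t → Δ s < 0 := by
        intro s hs hst
        by_contra hge
        push_neg at hge
        exact absurd (le_csSup hSbdd ⟨⟨le_trans h1s₀ hs.le, hst⟩, hge⟩) (not_le.mpr hs)
      have hΔs₀le : Δ s₀ ≤ 0 := by
        have htend : Tendsto Δ (𝓝[>] s₀) (𝓝 (Δ s₀)) :=
          (hΔcont.tendsto s₀).mono_left nhdsWithin_le_nhds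
        refine le_of_tendsto htend ?_
        filter_upwards [Ioc_mem_nhdsGT hs₀lt] with s hs
        exact (hΔneg s hs.1 hs.2).le
      have hΔs₀ : Δ s₀ = 0 := le_antisymm hΔs₀le hs₀mem.2
      have hpt : ∀ r ∈ Icc s₀ t, 0 ≤ hfun r := by
        intro r hr
        have h1r : (1:ℝ) ≤ r := le_trans h1s₀ hr.1
        have hr0 : (0:ℝ) < r := lt_of_lt_of_le one_pos h1r
        have hΔr : Δ r ≤ 0 := by
          rcases eq_or_lt_of_le hr.1 with h | h
          · rw [← h]; exact hΔs₀.le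
          · exact (hΔneg r h hr.2).le
        have hxr : 0 < x * r := mul_pos hx hr0
        have hyrle : y * r ≤ y * t := mul_le_mul_of_nonneg_left hr.2 hy.le
        have hxyr : x * r ≤ y * r := mul_le_mul_of_nonneg_right hxy hr0.le
        have hGxr : 0 < 1 - F (x * r) := hposle _ (le_trans hxyr hyrle)
        have hGyr : 0 < 1 - F (y * r) := hposle _ hyrle
        have hyrH : ((y * r : ℝ) : EReal) < H :=
          lt_of_le_of_lt (EReal.coe_le_coe_iff.mpr hyrle) hytH
        have higfr := hIGFR (x * r) (y * r) hxr hxyr hyrH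
        rw [div_le_div_iff₀ hGxr hGyr] at higfr
        have key : x * f (x * r) * (1 - F (y * r)) ≤ y * f (y * r) * (1 - F (x * r)) := by
          have h' : r * (x * f (x * r) * (1 - F (y * r))) ≤
              r * (y * f (y * r) * (1 - F (x * r))) := by
            calc r * (x * f (x * r) * (1 - F (y * r)))
                = x * r * f (x * r) * (1 - F (y * r)) := by ring
              _ ≤ y * r * f (y * r) * (1 - F (x * r)) := higfr
              _ = r * (y * f (y * r) * (1 - F (x * r))) := by ring
          exact le_of_mul_le_mul_left h' hr0
        have hΔr' : Gy * (1 - F (x * r)) ≤ Gx * (1 - F (y * r)) := by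
          simp only [hΔdef] at hΔr
          linarith
        have hGy0 : (0:ℝ) ≤ Gy := hGnonneg y
        have hyf : (0:ℝ) ≤ y * f (y * r) := mul_nonneg hy.le (hfnonneg _)
        have c1 : Gy * (x * f (x * r)) * (1 - F (y * r)) ≤
            Gy * (y * f (y * r)) * (1 - F (x * r)) := by
          calc Gy * (x * f (x * r)) * (1 - F (y * r))
              = Gy * (x * f (x * r) * (1 - F (y * r))) := by ring
            _ ≤ Gy * (y * f (y * r) * (1 - F (x * r))) :=
                mul_le_mul_of_nonneg_left key hGy0
            _ = Gy * (y * f (y * r)) * (1 - F (x * r)) := by ring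
        have c2 : Gy * (y * f (y * r)) * (1 - F (x * r)) ≤
            Gx * (y * f (y * r)) * (1 - F (y * r)) := by
          calc Gy * (y * f (y * r)) * (1 - F (x * r))
              = y * f (y * r) * (Gy * (1 - F (x * r))) := by ring
            _ ≤ y * f (y * r) * (Gx * (1 - F (y * r))) :=
                mul_le_mul_of_nonneg_left hΔr' hyf
            _ = Gx * (y * f (y * r)) * (1 - F (y * r)) := by ring
        have c3 : Gy * (x * f (x * r)) ≤ Gx * (y * f (y * r)) :=
          le_of_mul_le_mul_right (c1.trans c2) hGyr
        simp only [hhdef]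
        linarith
      have hInt0 : 0 ≤ ∫ r in s₀..t, hfun r :=
        intervalIntegral.integral_nonneg hs₀t fun u hu => hpt u hu
      have hdiff := hΔdiff s₀ t
      linarith
    simp only [hΔdef] at hΔt
    linarith
  -- Conclusion: substitution `u = c·s` and pointwise comparison.
  intro x y hx hxy hyH
  have hy : 0 < y := lt_of_lt_of_le hx hxy
  have hxH : (x : EReal) < H := lt_of_le_of_lt (EReal.coe_le_coe_iff.mpr hxy) hyH
  have hGx : 0 < 1 - F x := hFbar x hx.le hxH
  have hGy : 0 < 1 - F y := hFbar y hy.le hyH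
  have hsubx : (∫ u in Ioi x, (1 - F u)) = x * ∫ s in Ioi (1:ℝ), (1 - F (x * s)) := by
    have h := integral_comp_mul_left_Ioi (fun u : ℝ => 1 - F u) 1 hx
    rw [mul_one] at h
    rw [h, smul_eq_mul, ← mul_assoc, mul_inv_cancel₀ hx.ne', one_mul]
  have hsuby : (∫ u in Ioi y, (1 - F u)) = y * ∫ s in Ioi (1:ℝ), (1 - F (y * s)) := by
    have h := integral_comp_mul_left_Ioi (fun u : ℝ => 1 - F u) 1 hy
    rw [mul_one] at h
    rw [h, smul_eq_mul, ← mul_assoc, mul_inv_cancel₀ hy.ne', one_mul]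
  have hintx : IntegrableOn (fun s : ℝ => 1 - F (x * s)) (Ioi 1) := by
    have h := (integrableOn_Ioi_comp_mul_left_iff (fun u : ℝ => 1 - F u) 1 hx)
    rw [mul_one] at h
    exact h.mpr (hGint x hx.le)
  have hinty : IntegrableOn (fun s : ℝ => 1 - F (y * s)) (Ioi 1) := by
    have h := (integrableOn_Ioi_comp_mul_left_iff (fun u : ℝ => 1 - F u) 1 hy)
    rw [mul_one] at h
    exact h.mpr (hGint y hy.le)
  have hmono : (∫ s in Ioi (1:ℝ), (1 - F (y * s))) * (1 - F x) ≤
      (∫ s in Ioi (1:ℝ), (1 - F (x * s))) * (1 - F y) := by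
    rw [← integral_mul_const, ← integral_mul_const]
    refine setIntegral_mono_on (hinty.mul_const _) (hintx.mul_const _) measurableSet_Ioi ?_
    intro s hs
    exact star x y s hx hxy hyH (le_of_lt hs)
  rw [mrd, mrd, hsubx, hsuby, div_div, div_div,
    div_le_div_iff₀ (by positivity) (by positivity)]
  nlinarith [mul_le_mul_of_nonneg_left hmono (le_of_lt (mul_pos hx hy))]
end
end
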